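/- arXiv:2602.14478 — 9 statements merged into one kernel-verified Lean document; each statement's English description precedes it below -/
import Mathlib

section
/- Let f, h : ℝ^d → ℝ be measurable functions and a, b > 0. Let Q̃ = {(x,s,t) ∈ ℝ^d × ℝ × ℝ : h(x) ≤ a s, f(x) + a s ≤ b t}. Then the pushforward under the coordinate projection (x,s,t) ↦ x of the measure on ℝ^{d+2} having density (x,s,t) ↦ e^{-b t}·1_{Q̃}(x,s,t) with respect to Lebesgue measure equals the measure on ℝ^d having density x ↦ (1/(ab))·e^{-f(x)-h(x)} with respect to Lebesgue measure. (Equivalently, for every x ∈ ℝ^d, ∫_{h(x)/a}^{∞} ∫_{(f(x)+as)/b}^{∞} e^{-bt} dt ds = (1/(ab)) e^{-f(x)-h(x)}, and this identity integrates against any nonnegative measurable F(x).) -/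
set_option maxHeartbeats 1000000

open MeasureTheory Set Real

/-- Exponential tail integral: `∫_{t ≥ c} e^{-bt} dt = e^{-bc}/b`. -/
lemma aux_exp_lintegral {b : ℝ} (hb : 0 < b) (c : ℝ) :
    ∫⁻ t in Set.Ici c, ENNReal.ofReal (Real.exp (-(b * t)))
      = ENNReal.ofReal (Real.exp (-(b * c)) / b) := by
  have hreal : (∫ t in Set.Ioi c, Real.exp (-(b * t))) = Real.exp (-(b * c)) / b := by
    have h1 : (∫ t in Set.Ioi c, Real.exp (-(b * t)))
        = b⁻¹ • ∫ x in Set.Ioi (b * c), Real.exp (-x) :=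
      integral_comp_mul_left_Ioi (fun u => Real.exp (-u)) c hb
    rw [h1, integral_exp_neg_Ioi, smul_eq_mul, div_eq_inv_mul]
  have hint : IntegrableOn (fun t => Real.exp (-(b * t))) (Set.Ioi c) := by
    simpa [neg_mul] using exp_neg_integrableOn_Ioi c hb
  rw [← MeasureTheory.Measure.restrict_congr_set Ioi_ae_eq_Ici,
    ← ofReal_integral_eq_lintegral_ofReal hint
      (Filter.Eventually.of_forall fun t => (Real.exp_pos _).le), hreal]

/-- The X-marginal of the double-lifted measure with density `e^{-bt} 1_{Q̃}(x,s,t)` on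
`ℝ^d × ℝ × ℝ`, where `Q̃ = {(x,s,t) : h x ≤ a s, f x + a s ≤ b t}`, is the measure with
density `(1/(ab)) e^{-f(x)-h(x)}`. -/
theorem stmt_1 {d : ℕ} (f h : EuclideanSpace ℝ (Fin d) → ℝ)
    (hf : Measurable f) (hh : Measurable h) (a b : ℝ) (ha : 0 < a) (hb : 0 < b) :
    Measure.map (fun p : EuclideanSpace ℝ (Fin d) × ℝ × ℝ => p.1)
      (volume.withDensity
        (Set.indicator {p : EuclideanSpace ℝ (Fin d) × ℝ × ℝ |
            h p.1 ≤ a * p.2.1 ∧ f p.1 + a * p.2.1 ≤ b * p.2.2}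
          (fun p => ENNReal.ofReal (Real.exp (-b * p.2.2)))))
    = volume.withDensity
        (fun x => ENNReal.ofReal ((1 / (a * b)) * Real.exp (-f x - h x))) := by
  set Q : Set (EuclideanSpace ℝ (Fin d) × ℝ × ℝ) :=
    {p | h p.1 ≤ a * p.2.1 ∧ f p.1 + a * p.2.1 ≤ b * p.2.2} with hQdef
  have mh : Measurable fun p : EuclideanSpace ℝ (Fin d) × ℝ × ℝ => h p.1 := hh.comp measurable_fst
  have mf : Measurable fun p : EuclideanSpace ℝ (Fin d) × ℝ × ℝ => f p.1 := hf.comp measurable_fst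
  have ms1 : Measurable fun p : EuclideanSpace ℝ (Fin d) × ℝ × ℝ => a * p.2.1 :=
    (measurable_fst.comp measurable_snd).const_mul a
  have ms2 : Measurable fun p : EuclideanSpace ℝ (Fin d) × ℝ × ℝ => b * p.2.2 :=
    (measurable_snd.comp measurable_snd).const_mul b
  have hQ : MeasurableSet Q :=
    (measurableSet_le mh ms1).inter (measurableSet_le (mf.add ms1) ms2)
  set g : EuclideanSpace ℝ (Fin d) × ℝ × ℝ → ENNReal :=
    Q.indicator (fun p => ENNReal.ofReal (Real.exp (-b * p.2.2))) with hgdef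
  have hgmeas : Measurable g :=
    ((measurable_snd.snd.const_mul (-b)).exp.ennreal_ofReal).indicator hQ
  -- key pointwise computation of the fiber integral
  have key : ∀ x : EuclideanSpace ℝ (Fin d), (∫⁻ q : ℝ × ℝ, g (x, q))
      = ENNReal.ofReal ((1 / (a * b)) * Real.exp (-f x - h x)) := by
    intro x
    have hgx : Measurable fun q : ℝ × ℝ => g (x, q) :=
      hgmeas.comp (measurable_prodMk_left)
    rw [Measure.volume_eq_prod, lintegral_prod _ hgx.aemeasurable]
    have inner : ∀ s : ℝ, (∫⁻ t : ℝ, g (x, (s, t)))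
        = (Set.Ici (h x / a)).indicator
            (fun s => ENNReal.ofReal (Real.exp (-(f x + a * s)) / b)) s := by
      intro s
      by_cases hs : h x ≤ a * s
      · have hsmem : s ∈ Set.Ici (h x / a) := by
          rw [Set.mem_Ici, div_le_iff₀ ha]; linarith
        rw [Set.indicator_of_mem hsmem]
        have hpt : ∀ t : ℝ, g (x, (s, t))
            = (Set.Ici ((f x + a * s) / b)).indicator
                (fun t => ENNReal.ofReal (Real.exp (-(b * t)))) t := by
          intro t
          by_cases ht : f x + a * s ≤ b * t
          · have htm : t ∈ Set.Ici ((f x + a * s) / b) := by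
              rw [Set.mem_Ici, div_le_iff₀ hb]; linarith
            rw [Set.indicator_of_mem htm]
            have hmem : (x, (s, t)) ∈ Q := ⟨hs, ht⟩
            rw [hgdef, Set.indicator_of_mem hmem]
            simp [neg_mul]
          · have htm : t ∉ Set.Ici ((f x + a * s) / b) := by
              rw [Set.mem_Ici, div_le_iff₀ hb]; intro hc; exact ht (by linarith)
            rw [Set.indicator_of_notMem htm]
            have hnm : (x, (s, t)) ∉ Q := fun hmem => ht hmem.2
            rw [hgdef, Set.indicator_of_notMem hnm]
        simp_rw [hpt]
        rw [lintegral_indicator measurableSet_Ici _, aux_exp_lintegral hb,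
          mul_div_cancel₀ _ hb.ne']
      · have hsmem : s ∉ Set.Ici (h x / a) := by
          rw [Set.mem_Ici, div_le_iff₀ ha]; intro hc; exact hs (by linarith)
        rw [Set.indicator_of_notMem hsmem]
        have hpt : ∀ t : ℝ, g (x, (s, t)) = 0 := by
          intro t
          have hnm : (x, (s, t)) ∉ Q := fun hmem => hs hmem.1
          rw [hgdef, Set.indicator_of_notMem hnm]
        simp [hpt]
    simp_rw [inner]
    rw [lintegral_indicator measurableSet_Ici _]
    have expand : ∀ s : ℝ, ENNReal.ofReal (Real.exp (-(f x + a * s)) / b)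
        = ENNReal.ofReal (Real.exp (-f x) / b) * ENNReal.ofReal (Real.exp (-(a * s))) := by
      intro s
      rw [← ENNReal.ofReal_mul (by positivity)]
      congr 1
      rw [neg_add, Real.exp_add]
      ring
    simp_rw [expand]
    have hmexp : Measurable fun s : ℝ => ENNReal.ofReal (Real.exp (-(a * s))) :=
      ((measurable_id.const_mul a).neg.exp).ennreal_ofReal
    rw [lintegral_const_mul _ hmexp, aux_exp_lintegral ha, mul_div_cancel₀ _ ha.ne',
      ← ENNReal.ofReal_mul (by positivity)]
    congr 1
    rw [show -f x - h x = (-f x) + (-h x) by ring, Real.exp_add]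
    field_simp
  -- measure extensionality
  ext A hA
  rw [Measure.map_apply measurable_fst hA, withDensity_apply _ (measurable_fst hA),
    withDensity_apply _ hA]
  have goal' : (∫⁻ p in (Prod.fst : EuclideanSpace ℝ (Fin d) × ℝ × ℝ → EuclideanSpace ℝ (Fin d)) ⁻¹' A, g p)
      = ∫⁻ x in A, ENNReal.ofReal ((1 / (a * b)) * Real.exp (-f x - h x)) := by
    rw [← lintegral_indicator (measurable_fst hA) g, ← lintegral_indicator hA _,
      Measure.volume_eq_prod,
      lintegral_prod _ ((hgmeas.indicator (measurable_fst hA)).aemeasurable)]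
    apply lintegral_congr
    intro x
    by_cases hx : x ∈ A
    · have h1 : ∀ q : ℝ × ℝ, (Prod.fst ⁻¹' A).indicator g (x, q) = g (x, q) := fun q =>
        Set.indicator_of_mem (by exact hx) g
      simp_rw [h1]
      rw [key x, Set.indicator_of_mem hx]
    · have h1 : ∀ q : ℝ × ℝ, (Prod.fst ⁻¹' A).indicator g (x, q) = 0 := fun q =>
        Set.indicator_of_notMem (by exact hx) g
      simp_rw [h1]
      rw [lintegral_zero, Set.indicator_of_notMem hx]
  exact goal'
end

section
/- Let f : ℝ^d → ℝ be convex, let x̂ ∈ ℝ^d, and let 0 < λ₁ < λ₂. Suppose x₁ minimizes y ↦ f(y) + (1/(2λ₁))‖y − x̂‖² over ℝ^d and x₂ minimizes y ↦ f(y) + (1/(2λ₂))‖y − x̂‖² over ℝ^d. Then (λ₂ − λ₁)(f(x₂) − f(x₁)) ≤ −‖x₂ − x₁‖². In particular f(x₂) ≤ f(x₁), with strict inequality whenever x₂ ≠ x₁, so the map λ ↦ f(prox_{λf}(x̂)) is strictly decreasing. -/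
/-!
The function `y ↦ f y + ‖y - x̂‖² / (2λ)` is `1/λ`-strongly convex, so at its minimiser `x` it
grows at least quadratically: `f x + ‖x - x̂‖² / (2λ) + ‖y - x‖² / (2λ) ≤ f y + ‖y - x̂‖² / (2λ)`.
Applying this to `x₁` with `y = x₂` and to `x₂` with `y = x₁`, scaling by `2λ₁` and `2λ₂`
and adding, the terms `‖xᵢ - x̂‖²` cancel and what remains is
`2 (λ₂ - λ₁) (f x₂ - f x₁) + 2 ‖x₂ - x₁‖² ≤ 0`.
-/

open Filter Topology

section StrongConvexity

variable {E : Type*} [NormedAddCommGroup E] [InnerProductSpace ℝ E] {s : Set E} {f : E → ℝ}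

lemma strongConvexOn_mul_sq_norm_sub (hs : Convex ℝ s) (c : ℝ) (a : E) :
    StrongConvexOn s (2 * c) fun y ↦ c * ‖y - a‖ ^ 2 := by
  rw [strongConvexOn_iff_convex]
  -- `c ‖y - a‖² - c ‖y‖²` is affine in `y`
  refine (((-(2 * c)) • innerₗ E a).convexOn hs |>.add_const (c * ‖a‖ ^ 2)).congr fun y _ ↦ ?_
  simp only [Pi.add_apply, LinearMap.smul_apply, innerₗ_apply_apply, smul_eq_mul,
    norm_sub_sq_real, real_inner_comm a y]
  ring

lemma ConvexOn.strongConvexOn_add_mul_sq_norm_sub (hf : ConvexOn ℝ s f) (c : ℝ) (a : E) :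
    StrongConvexOn s (2 * c) fun y ↦ f y + c * ‖y - a‖ ^ 2 :=
  ((strongConvexOn_zero.mpr hf).add (strongConvexOn_mul_sq_norm_sub hf.1 c a)).mono
    fun r ↦ by simp

lemma StrongConvexOn.add_le_of_isMinOn {m : ℝ} (hf : StrongConvexOn s m f) {x y : E}
    (hx : x ∈ s) (hy : y ∈ s) (hmin : IsMinOn f s x) :
    f x + m / 2 * ‖y - x‖ ^ 2 ≤ f y := by
  have hsegment : ∀ t ∈ Set.Ioo (0 : ℝ) 1, f x + (1 - t) * (m / 2 * ‖y - x‖ ^ 2) ≤ f y := by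
    rintro t ⟨ht0, ht1⟩
    have hconv := hf.2 hx hy (sub_nonneg.mpr ht1.le) ht0.le (sub_add_cancel 1 t)
    have hle : f x ≤ f ((1 - t) • x + t • y) := hmin (hf.1 hx hy (by linarith) ht0.le (by ring))
    rw [norm_sub_rev] at hconv
    simp only [smul_eq_mul] at hconv
    nlinarith
  have hlim : Tendsto (fun t : ℝ ↦ f x + (1 - t) * (m / 2 * ‖y - x‖ ^ 2)) (𝓝[>] 0)
      (𝓝 (f x + m / 2 * ‖y - x‖ ^ 2)) :=
    tendsto_nhdsWithin_of_tendsto_nhds <| (by fun_prop : Continuous _).tendsto' 0 _ (by simp)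
  exact le_of_tendsto hlim (mem_of_superset (Ioo_mem_nhdsGT one_pos) hsegment)

end StrongConvexity

section Prox

variable {E : Type*} [NormedAddCommGroup E] [InnerProductSpace ℝ E]

def IsProxPoint (f : E → ℝ) (lam : ℝ) (a x : E) : Prop :=
  ∀ y, f x + 1 / (2 * lam) * ‖x - a‖ ^ 2 ≤ f y + 1 / (2 * lam) * ‖y - a‖ ^ 2

lemma IsProxPoint.two_mul_sub_add_sq_norm_le {f : E → ℝ} {lam : ℝ} {a x : E}
    (hx : IsProxPoint f lam a x) (hf : ConvexOn ℝ Set.univ f) (hlam : 0 < lam) (y : E) :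
    2 * lam * (f x - f y) + ‖x - a‖ ^ 2 + ‖y - x‖ ^ 2 ≤ ‖y - a‖ ^ 2 := by
  have hgrowth := (hf.strongConvexOn_add_mul_sq_norm_sub (1 / (2 * lam)) a).add_le_of_isMinOn
    (Set.mem_univ x) (Set.mem_univ y) fun z _ ↦ hx z
  rw [mul_div_cancel_left₀ _ two_ne_zero] at hgrowth
  have := mul_le_mul_of_nonneg_left hgrowth (by positivity : (0 : ℝ) ≤ 2 * lam)
  field_simp at this
  linarith

end Prox

/-- Monotonicity of the proximal point in the proximal parameter: if `x₁` and `x₂` are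
proximal points of the convex function `f` at `x̂` with parameters `0 < λ₁ < λ₂`, then
`(λ₂ - λ₁)(f x₂ - f x₁) ≤ -‖x₂ - x₁‖²`; in particular `f x₂ ≤ f x₁` with strict inequality
when `x₂ ≠ x₁`. -/
theorem stmt_5 {d : ℕ} (f : EuclideanSpace ℝ (Fin d) → ℝ)
    (hconv : ConvexOn ℝ Set.univ f)
    (xhat : EuclideanSpace ℝ (Fin d)) (lam₁ lam₂ : ℝ) (h1 : 0 < lam₁) (h12 : lam₁ < lam₂)
    (x₁ x₂ : EuclideanSpace ℝ (Fin d))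
    (hx₁ : ∀ y, f x₁ + (1 / (2 * lam₁)) * ‖x₁ - xhat‖ ^ 2
        ≤ f y + (1 / (2 * lam₁)) * ‖y - xhat‖ ^ 2)
    (hx₂ : ∀ y, f x₂ + (1 / (2 * lam₂)) * ‖x₂ - xhat‖ ^ 2
        ≤ f y + (1 / (2 * lam₂)) * ‖y - xhat‖ ^ 2) :
    (lam₂ - lam₁) * (f x₂ - f x₁) ≤ -‖x₂ - x₁‖ ^ 2 ∧
      f x₂ ≤ f x₁ ∧ (x₂ ≠ x₁ → f x₂ < f x₁) := by
  have h₁₂ := IsProxPoint.two_mul_sub_add_sq_norm_le hx₁ hconv h1 x₂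
  have h₂₁ := IsProxPoint.two_mul_sub_add_sq_norm_le hx₂ hconv (h1.trans h12) x₁
  rw [norm_sub_rev x₁ x₂] at h₂₁
  have hmain : (lam₂ - lam₁) * (f x₂ - f x₁) ≤ -‖x₂ - x₁‖ ^ 2 := by linarith
  have hgap : 0 < lam₂ - lam₁ := sub_pos.mpr h12
  refine ⟨hmain, ?_, fun hne ↦ ?_⟩
  · exact sub_nonpos.mp <| nonpos_of_mul_nonpos_right (hmain.trans (by simp)) hgap
  · have hdist : 0 < ‖x₂ - x₁‖ ^ 2 :=
      pow_pos (norm_pos_iff.mpr (sub_ne_zero.mpr hne)) 2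
    exact sub_neg.mp <| neg_of_mul_neg_right (hmain.trans_lt (by linarith)) hgap.le
end

section
/- Let f : ℝ^d → ℝ, a > 0, η > 0, y ∈ ℝ^d and s ∈ ℝ. For each x ∈ ℝ^d, the function t ↦ a t + (1/(2η))(‖x − y‖² + (t − s)²) restricted to {t ∈ ℝ : f(x) ≤ a t} attains its minimum at t(x) = max{f(x)/a, s − a η}, and the minimum value equals (1/(2η))‖x − y‖² + (1/(2η))(max{f(x)/a − (s − a η), 0})² + a s − a²η/2. Consequently, minimizing Θ(x,t) = a t + (1/(2η))‖(x,t) − (y,s)‖² over {(x,t) : x ∈ K, f(x) ≤ a t} is equivalent to minimizing ζ(x) = (1/(2η))‖x − y‖² + (1/(2η))(max{f(x)/a − (s − a η), 0})² over x ∈ K. -/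
lemma aux_feas (a η b s : ℝ) (ha : 0 < a) :
    a * b ≤ a * max b (s - a * η) :=
  mul_le_mul_of_nonneg_left (le_max_left _ _) ha.le

lemma aux_min (a η b s N t : ℝ) (ha : 0 < a) (hη : 0 < η) (ht : b ≤ t) :
    a * max b (s - a * η) + (1 / (2 * η)) * (N + (max b (s - a * η) - s) ^ 2)
      ≤ a * t + (1 / (2 * η)) * (N + (t - s) ^ 2) := by
  have hc : (0:ℝ) < 1 / (2 * η) := by positivity
  rcases le_total b (s - a * η) with h | h
  · rw [max_eq_right h]
    have key : a * t + (1/(2*η))*(N+(t-s)^2) - (a*(s-a*η) + (1/(2*η))*(N+((s-a*η)-s)^2))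
        = (1/(2*η))*((t-(s-a*η))^2) := by field_simp; ring
    nlinarith [mul_nonneg hc.le (sq_nonneg (t - (s - a*η)))]
  · rw [max_eq_left h]
    have key : a * t + (1/(2*η))*(N+(t-s)^2) - (a*b + (1/(2*η))*(N+(b-s)^2))
        = (1/(2*η))*((t-b)*((t-(s-a*η))+(b-(s-a*η)))) := by field_simp; ring
    have h1 : 0 ≤ (t-b)*((t-(s-a*η))+(b-(s-a*η))) := by nlinarith
    nlinarith [mul_nonneg hc.le h1]

lemma aux_uniq (a η b s N t : ℝ) (ha : 0 < a) (hη : 0 < η) (ht : b ≤ t)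
    (hle : a * t + (1 / (2 * η)) * (N + (t - s) ^ 2)
      ≤ a * max b (s - a * η) + (1 / (2 * η)) * (N + (max b (s - a * η) - s) ^ 2)) :
    t = max b (s - a * η) := by
  have hc : (0:ℝ) < 1 / (2 * η) := by positivity
  rcases le_total b (s - a * η) with h | h
  · rw [max_eq_right h] at hle ⊢
    have key : a * t + (1/(2*η))*(N+(t-s)^2) - (a*(s-a*η) + (1/(2*η))*(N+((s-a*η)-s)^2))
        = (1/(2*η))*((t-(s-a*η))^2) := by field_simp; ring
    have h2 : (1/(2*η))*((t-(s-a*η))^2) ≤ 0 := by linarith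
    have h3 : (t-(s-a*η))^2 ≤ 0 := by
      by_contra h4
      push_neg at h4
      nlinarith
    have h5 := sq_nonneg (t-(s-a*η))
    have h6 : (t-(s-a*η))^2 = 0 := le_antisymm h3 h5
    have := pow_eq_zero_iff (n := 2) (by norm_num) |>.mp h6
    linarith
  · rw [max_eq_left h] at hle ⊢
    have key : a * t + (1/(2*η))*(N+(t-s)^2) - (a*b + (1/(2*η))*(N+(b-s)^2))
        = (1/(2*η))*((t-b)*((t-(s-a*η))+(b-(s-a*η)))) := by field_simp; ring
    have h2 : (1/(2*η))*((t-b)*((t-(s-a*η))+(b-(s-a*η)))) ≤ 0 := by linarith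
    have h3 : (t-b)*((t-(s-a*η))+(b-(s-a*η))) ≤ 0 := by
      by_contra h4
      push_neg at h4
      nlinarith
    nlinarith

lemma aux_val (a η b s N : ℝ) (ha : 0 < a) (hη : 0 < η) :
    a * max b (s - a * η) + (1 / (2 * η)) * (N + (max b (s - a * η) - s) ^ 2)
      = (1 / (2 * η)) * N + (1 / (2 * η)) * (max (b - (s - a * η)) 0) ^ 2
        + a * s - a ^ 2 * η / 2 := by
  have hm : max (b - (s - a * η)) 0 = max b (s - a * η) - (s - a * η) := by
    rw [← max_sub_sub_right]
    norm_num
  rw [hm]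
  set T := max b (s - a * η)
  field_simp
  ring

/-- For each `x`, the function `t ↦ a t + (1/(2η))(‖x-y‖² + (t-s)²)` on `{t : f x ≤ a t}`
attains its minimum at `t(x) = max (f x / a) (s - aη)`, with minimum value
`(1/(2η))‖x-y‖² + (1/(2η))([f x / a - (s - aη)]₊)² + a s - a²η/2`. Consequently, minimizing
`Θ(x,t) = a t + (1/(2η))‖(x,t)-(y,s)‖²` over `{(x,t) : x ∈ K, f x ≤ a t}` is equivalent to
minimizing `ζ(x) = (1/(2η))‖x-y‖² + (1/(2η))([f x / a - (s - aη)]₊)²` over `x ∈ K`. -/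
theorem stmt_9 {d : ℕ} (K : Set (EuclideanSpace ℝ (Fin d)))
    (f : EuclideanSpace ℝ (Fin d) → ℝ) (a η : ℝ) (ha : 0 < a) (hη : 0 < η)
    (y : EuclideanSpace ℝ (Fin d)) (s : ℝ) :
    (∀ x : EuclideanSpace ℝ (Fin d),
      f x ≤ a * max (f x / a) (s - a * η) ∧
      (∀ t : ℝ, f x ≤ a * t →
        a * max (f x / a) (s - a * η)
            + (1 / (2 * η)) * (‖x - y‖ ^ 2 + (max (f x / a) (s - a * η) - s) ^ 2)
          ≤ a * t + (1 / (2 * η)) * (‖x - y‖ ^ 2 + (t - s) ^ 2)) ∧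
      a * max (f x / a) (s - a * η)
          + (1 / (2 * η)) * (‖x - y‖ ^ 2 + (max (f x / a) (s - a * η) - s) ^ 2)
        = (1 / (2 * η)) * ‖x - y‖ ^ 2
          + (1 / (2 * η)) * (max (f x / a - (s - a * η)) 0) ^ 2 + a * s - a ^ 2 * η / 2)
    ∧
    (∀ (xs : EuclideanSpace ℝ (Fin d)) (ts : ℝ), xs ∈ K →
      ((f xs ≤ a * ts ∧
          ∀ x ∈ K, ∀ t : ℝ, f x ≤ a * t →
            a * ts + (1 / (2 * η)) * (‖xs - y‖ ^ 2 + (ts - s) ^ 2)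
              ≤ a * t + (1 / (2 * η)) * (‖x - y‖ ^ 2 + (t - s) ^ 2))
        ↔ ((∀ x ∈ K,
              (1 / (2 * η)) * ‖xs - y‖ ^ 2
                  + (1 / (2 * η)) * (max (f xs / a - (s - a * η)) 0) ^ 2
                ≤ (1 / (2 * η)) * ‖x - y‖ ^ 2
                  + (1 / (2 * η)) * (max (f x / a - (s - a * η)) 0) ^ 2)
            ∧ ts = max (f xs / a) (s - a * η)))) := by
  have hfa : ∀ x : EuclideanSpace ℝ (Fin d), a * (f x / a) = f x := fun x => by
    field_simp
  have hfeas : ∀ x : EuclideanSpace ℝ (Fin d),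
      f x ≤ a * max (f x / a) (s - a * η) := fun x => by
    calc f x = a * (f x / a) := (hfa x).symm
      _ ≤ _ := aux_feas a η (f x / a) s ha
  constructor
  · intro x
    refine ⟨hfeas x, ?_, aux_val a η (f x / a) s (‖x - y‖ ^ 2) ha hη⟩
    intro t htf
    have ht : f x / a ≤ t := by rw [div_le_iff₀ ha]; nlinarith
    exact aux_min a η (f x / a) s (‖x - y‖ ^ 2) t ha hη ht
  · intro xs ts hxs
    constructor
    · rintro ⟨hf, hopt⟩
      have hts : f xs / a ≤ ts := by rw [div_le_iff₀ ha]; nlinarith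
      have hts_eq : ts = max (f xs / a) (s - a * η) :=
        aux_uniq a η (f xs / a) s (‖xs - y‖ ^ 2) ts ha hη hts
          (hopt xs hxs _ (hfeas xs))
      refine ⟨?_, hts_eq⟩
      intro x hx
      have h1 := hopt x hx (max (f x / a) (s - a * η)) (hfeas x)
      rw [hts_eq, aux_val a η (f xs / a) s (‖xs - y‖ ^ 2) ha hη,
        aux_val a η (f x / a) s (‖x - y‖ ^ 2) ha hη] at h1
      linarith
    · rintro ⟨hzeta, hts_eq⟩
      subst hts_eq
      refine ⟨hfeas xs, ?_⟩
      intro x hx t htf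
      have ht : f x / a ≤ t := by rw [div_le_iff₀ ha]; nlinarith
      have h2 := aux_min a η (f x / a) s (‖x - y‖ ^ 2) t ha hη ht
      have h1 := hzeta x hx
      have e1 := aux_val a η (f xs / a) s (‖xs - y‖ ^ 2) ha hη
      have e2 := aux_val a η (f x / a) s (‖x - y‖ ^ 2) ha hη
      linarith
end

section
/- Let d ≥ 1, a > 0, η > 0, L > 0, y ∈ ℝ^d, s ∈ ℝ. Let K ⊆ ℝ^d be convex and let f : ℝ^d → ℝ be convex and L-Lipschitz on K. Define ζ(x) = (1/(2η))‖x − y‖² + (1/(2η))(max{f(x)/a − (s − a η), 0})². Suppose x* minimizes ζ over K, and x̃ ∈ K satisfies ζ(x̃) ≤ ζ(x*) + 1/(d+1). Set t̃ = max{f(x̃)/a, s − a η} and t* = max{f(x*)/a, s − a η}. Then ‖x̃ − x*‖ ≤ √(2η/(d+1)), |t̃ − t*| ≤ (L/a)√(2η/(d+1)), and hence ‖(x̃, t̃) − (x*, t*)‖ ≤ (1 + L/a)·√(2η/(d+1)). -/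
lemma comb_norm_sq {d : ℕ} (u v y : EuclideanSpace ℝ (Fin d)) (l : ℝ) :
    ‖((1 - l) • u + l • v) - y‖ ^ 2
      = (1 - l) * ‖u - y‖ ^ 2 + l * ‖v - y‖ ^ 2 - l * (1 - l) * ‖u - v‖ ^ 2 := by
  have h1 : ((1 - l) • u + l • v) - y = (1 - l) • (u - y) + l • (v - y) := by module
  have h2 : u - v = (u - y) - (v - y) := by abel
  rw [h1, h2]
  have e1 := @norm_add_sq_real (EuclideanSpace ℝ (Fin d)) _ _ ((1 - l) • (u - y)) (l • (v - y))
  have e2 := @norm_sub_sq_real (EuclideanSpace ℝ (Fin d)) _ _ (u - y) (v - y)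
  rw [e1, e2]
  rw [norm_smul, norm_smul, real_inner_smul_left, real_inner_smul_right]
  simp only [Real.norm_eq_abs, mul_pow, sq_abs]
  ring

set_option maxHeartbeats 1000000 in
/-- Error bound for the approximate minimizer of
`ζ(x) = (1/(2η))‖x-y‖² + (1/(2η))(max (f x / a - (s - aη)) 0)²` over `K`: if `x*` minimizes
`ζ` over `K` and `x̃ ∈ K` has `ζ(x̃) ≤ ζ(x*) + 1/(d+1)`, with `t̃, t*` the corresponding
`max (f · / a) (s - aη)` values, then `‖x̃ - x*‖ ≤ √(2η/(d+1))`,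
`|t̃ - t*| ≤ (L/a)√(2η/(d+1))`, and `‖(x̃,t̃) - (x*,t*)‖ ≤ (1 + L/a)√(2η/(d+1))`. -/
theorem stmt_11 {d : ℕ} (hd : 1 ≤ d) (a η L : ℝ) (ha : 0 < a) (hη : 0 < η) (hL : 0 < L)
    (y : EuclideanSpace ℝ (Fin d)) (s : ℝ)
    (K : Set (EuclideanSpace ℝ (Fin d))) (hK : Convex ℝ K)
    (f : EuclideanSpace ℝ (Fin d) → ℝ) (hfc : ConvexOn ℝ K f)
    (hfL : ∀ u ∈ K, ∀ v ∈ K, |f u - f v| ≤ L * ‖u - v‖)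
    (xs : EuclideanSpace ℝ (Fin d)) (hxs : xs ∈ K)
    (hmin : ∀ x ∈ K,
      (1 / (2 * η)) * ‖xs - y‖ ^ 2 + (1 / (2 * η)) * (max (f xs / a - (s - a * η)) 0) ^ 2
        ≤ (1 / (2 * η)) * ‖x - y‖ ^ 2 + (1 / (2 * η)) * (max (f x / a - (s - a * η)) 0) ^ 2)
    (xt : EuclideanSpace ℝ (Fin d)) (hxt : xt ∈ K)
    (happrox :
      (1 / (2 * η)) * ‖xt - y‖ ^ 2 + (1 / (2 * η)) * (max (f xt / a - (s - a * η)) 0) ^ 2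
        ≤ (1 / (2 * η)) * ‖xs - y‖ ^ 2
          + (1 / (2 * η)) * (max (f xs / a - (s - a * η)) 0) ^ 2 + 1 / (d + 1)) :
    ‖xt - xs‖ ≤ Real.sqrt (2 * η / (d + 1)) ∧
    |max (f xt / a) (s - a * η) - max (f xs / a) (s - a * η)|
      ≤ (L / a) * Real.sqrt (2 * η / (d + 1)) ∧
    Real.sqrt (‖xt - xs‖ ^ 2
        + (max (f xt / a) (s - a * η) - max (f xs / a) (s - a * η)) ^ 2)
      ≤ (1 + L / a) * Real.sqrt (2 * η / (d + 1)) := by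
  have hd1 : (0:ℝ) < (d:ℝ) + 1 := by positivity
  set c : ℝ := s - a * η with hc
  set D : ℝ := ‖xt - xs‖ ^ 2 with hDdef
  set B : ℝ := 2 * η / ((d:ℝ) + 1) with hB
  have hBpos : 0 < B := by positivity
  -- key: for all l ∈ (0,1], (1-l)*D ≤ B
  have hkey : ∀ l : ℝ, 0 < l → l ≤ 1 → (1 - l) * D ≤ B := by
    intro l hl0 hl1
    set m : EuclideanSpace ℝ (Fin d) := (1 - l) • xs + l • xt with hm_def
    have hm : m ∈ K := hK hxs hxt (by linarith) hl0.le (by ring)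
    have hfm : f m ≤ (1 - l) * f xs + l * f xt :=
      hfc.2 hxs hxt (by linarith : (0:ℝ) ≤ 1 - l) hl0.le (by ring)
    set A1 : ℝ := max (f xs / a - c) 0 with hA1
    set A2 : ℝ := max (f xt / a - c) 0 with hA2
    have hA1nn : 0 ≤ A1 := le_max_right _ _
    have hA2nn : 0 ≤ A2 := le_max_right _ _
    set M : ℝ := max (f m / a - c) 0 with hMdef
    have hgm : M ^ 2 ≤ (1 - l) * A1 ^ 2 + l * A2 ^ 2 := by
      have h1 : f m / a - c ≤ (1 - l) * A1 + l * A2 := by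
        have h1a : f xs / a - c ≤ A1 := le_max_left _ _
        have h1b : f xt / a - c ≤ A2 := le_max_left _ _
        have : f m / a - c
            ≤ (1 - l) * (f xs / a - c) + l * (f xt / a - c) := by
          have hdiv : f m / a ≤ ((1 - l) * f xs + l * f xt) / a := by
            gcongr
          rw [add_div, mul_div_assoc, mul_div_assoc] at hdiv
          nlinarith
        nlinarith
      have h2 : M ≤ (1 - l) * A1 + l * A2 := max_le h1 (by nlinarith)
      have hMnn : (0:ℝ) ≤ M := le_max_right _ _
      have h3 : M ^ 2 ≤ ((1 - l) * A1 + l * A2) ^ 2 := by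
        apply pow_le_pow_left₀ hMnn h2
      nlinarith [mul_nonneg (mul_nonneg hl0.le (by linarith : (0:ℝ) ≤ 1 - l)) (sq_nonneg (A1 - A2))]
    have hq : ‖m - y‖ ^ 2 = (1 - l) * ‖xs - y‖ ^ 2 + l * ‖xt - y‖ ^ 2 - l * (1 - l) * ‖xs - xt‖ ^ 2 := comb_norm_sq xs xt y l
    have hmin' := hmin _ hm
    rw [← hMdef] at hmin'
    rw [hq] at hmin'
    -- multiply out
    have h2η : (0:ℝ) < 2 * η := by linarith
    have hfrac : (0:ℝ) < 1 / (2 * η) := by positivity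
    -- from hmin' and hgm: ζ(xs) ≤ stuff
    have hDsym : ‖xs - xt‖ ^ 2 = D := by rw [hDdef, norm_sub_rev]
    rw [hDsym] at hmin'
    have hstep : ‖xs - y‖ ^ 2 + A1 ^ 2
        ≤ (1 - l) * ‖xs - y‖ ^ 2 + l * ‖xt - y‖ ^ 2 - l * (1 - l) * D
          + ((1 - l) * A1 ^ 2 + l * A2 ^ 2) := by
      have := mul_le_mul_of_nonneg_left hgm hfrac.le
      nlinarith [hmin']
    have happ : ‖xt - y‖ ^ 2 + A2 ^ 2 ≤ ‖xs - y‖ ^ 2 + A1 ^ 2 + 2 * η / ((d:ℝ) + 1) := by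
      have h := happrox
      have : 1 / (2 * η) * (‖xt - y‖ ^ 2 + A2 ^ 2) ≤ 1 / (2 * η) * (‖xs - y‖ ^ 2 + A1 ^ 2) + 1 / ((d:ℝ) + 1) := by
        rw [hA1, hA2]; push_cast at h ⊢; linarith
      have h2 := mul_le_mul_of_nonneg_left this h2η.le
      rw [mul_add (2*η)] at h2
      field_simp at h2 ⊢
      linarith
    -- combine: l*(1-l)*D ≤ l * B
    have hcomb : l * (1 - l) * D ≤ l * B := by nlinarith
    exact le_of_mul_le_mul_left (by nlinarith) hl0
  have hDB : D ≤ B := by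
    by_contra hcon
    push_neg at hcon
    have hDpos : 0 < D := lt_trans hBpos hcon
    have hl := hkey ((D - B) / (2 * D)) (div_pos (by linarith) (by linarith)) (by rw [div_le_one (by linarith)]; nlinarith)
    have : (1 - (D - B) / (2 * D)) * D = (D + B) / 2 := by field_simp; ring
    rw [this] at hl
    linarith
  have hnorm : ‖xt - xs‖ ≤ Real.sqrt B := by
    rw [Real.le_sqrt (norm_nonneg _)]
    · exact hDB
    · exact hBpos.le
  have htd : |max (f xt / a) c - max (f xs / a) c| ≤ (L / a) * Real.sqrt B := by
    calc |max (f xt / a) c - max (f xs / a) c| ≤ |f xt / a - f xs / a| :=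
          abs_max_sub_max_le_abs _ _ _
      _ = |f xt - f xs| / a := by rw [div_sub_div_same, abs_div, abs_of_pos ha]
      _ ≤ L * ‖xt - xs‖ / a := by
          gcongr
          exact hfL _ hxt _ hxs
      _ ≤ (L / a) * Real.sqrt B := by
          rw [div_mul_eq_mul_div]
          gcongr
  refine ⟨hnorm, htd, ?_⟩
  set T : ℝ := max (f xt / a) c - max (f xs / a) c
  have habs : |T| ≤ (L / a) * Real.sqrt B := htd
  have hT2 : T ^ 2 ≤ ((L / a) * Real.sqrt B) ^ 2 := by
    rw [← sq_abs]; apply pow_le_pow_left₀ (abs_nonneg _) habs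
  have hsB : 0 ≤ Real.sqrt B := Real.sqrt_nonneg _
  have : Real.sqrt (D + T ^ 2) ≤ Real.sqrt ((Real.sqrt B + (L / a) * Real.sqrt B) ^ 2) := by
    apply Real.sqrt_le_sqrt
    have hD' : D ≤ Real.sqrt B ^ 2 := by
      rw [Real.sq_sqrt hBpos.le]; exact hDB
    nlinarith [mul_nonneg hsB (mul_nonneg (div_pos hL ha).le hsB)]
  rw [Real.sqrt_sq (by positivity)] at this
  calc Real.sqrt (D + T ^ 2) ≤ Real.sqrt B + (L / a) * Real.sqrt B := this
    _ = (1 + L / a) * Real.sqrt B := by ring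
end

section
/- Let d ≥ 1, η > 0, L ≥ 0, and take the scaling a = d. Let Q ⊆ ℝ^{d+1} be nonempty, closed and convex, let y ∈ ℝ^d, s ∈ ℝ, and set z = (y, s − dη). Let w* ∈ Q be the metric projection of z onto Q (so ‖w* − z‖ ≤ ‖w − z‖ for all w ∈ Q), and let w̃ ∈ ℝ^{d+1} satisfy ‖w̃ − w*‖ ≤ (1 + L/d)·√(2η/(d+1)). Define, for w ∈ ℝ^{d+1}, P₁(w) = (‖w − w̃‖² + ‖w̃ − z‖²)/(2η) − (√2·(L+d)/(d·√(η(d+1))))·(‖w − w̃‖ + ‖w̃ − z‖) − 6(L+d)²/(d²(d+1)) + d s − d²η/2. Then for every w = (x,t) ∈ Q one has P₁(w) ≤ d t + (1/(2η))·‖(x,t) − (y,s)‖²; that is, P₁ lies below the RGO potential Θ^{η,Q}_{y,s} everywhere, so the rejection-sampling acceptance ratio exp(−Θ^{η,Q}_{y,s}(w) + P₁(w)) is at most 1. -/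
/-!
Let `w*` be the projection of `z` onto `Q` and `E = (1 + L/d)√(2η/(d+1))`. Convexity of `Q`
gives the Pythagorean inequality `‖w* - z‖² + ‖w - w*‖² ≤ ‖w - z‖²` for `w ∈ Q`. Replacing `w*`
by `w̃`, which is within `E` of it, changes each of the two distances by at most `E` (triangle
inequality), so `‖w - w̃‖² + ‖w̃ - z‖² ≤ ‖w - z‖² + 2E(‖w - w̃‖ + ‖w̃ - z‖) + 6E²`. The constants
of `P₁` are exactly `E/η` and `3E²/η`, and since `z` is `(y, s)` shifted by `dη` in the last
coordinate, `‖w - z‖²/(2η) - d²η/2 + ds = dt + ‖w - (y, s)‖²/(2η)`.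
-/

/-- The Euclidean norm of a point of `ℝ^d × ℝ ≅ ℝ^{d+1}`. -/
noncomputable def enorm2 {d : ℕ} (p : EuclideanSpace ℝ (Fin d) × ℝ) : ℝ :=
  Real.sqrt (‖p.1‖ ^ 2 + p.2 ^ 2)

theorem Convex.norm_sub_sq_add_norm_sub_sq_le {F : Type*} [NormedAddCommGroup F]
    [InnerProductSpace ℝ F] {K : Set F} (hK : Convex ℝ K) {u v w : F} (hv : v ∈ K)
    (hmin : IsMinOn (fun x => ‖x - u‖) K v) (hw : w ∈ K) :
    ‖v - u‖ ^ 2 + ‖w - v‖ ^ 2 ≤ ‖w - u‖ ^ 2 := by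
  have hiInf : ‖u - v‖ = ⨅ x : K, ‖u - x‖ := by
    simp only [norm_sub_rev u]
    exact (hmin.iInf_eq hv).symm
  have hinner := (norm_eq_iInf_iff_real_inner_le_zero hK hv).1 hiInf w hw
  have hexpand := norm_sub_sq_real (w - v) (u - v)
  rw [sub_sub_sub_cancel_right, real_inner_comm] at hexpand
  rw [norm_sub_rev v u]
  linarith

theorem sq_le_sq_add_of_abs_sub_le {a b ε : ℝ} (ha : 0 ≤ a) (h : |a - b| ≤ ε) :
    a ^ 2 ≤ b ^ 2 + 2 * ε * a + 3 * ε ^ 2 := by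
  obtain ⟨h₁, h₂⟩ := abs_le.1 h
  nlinarith

theorem norm_sub_sq_add_norm_sub_sq_le_of_norm_sub_le {F : Type*} [SeminormedAddCommGroup F]
    {u v w p : F} {E : ℝ} (hpyth : ‖v - u‖ ^ 2 + ‖w - v‖ ^ 2 ≤ ‖w - u‖ ^ 2)
    (hp : ‖p - v‖ ≤ E) :
    ‖w - p‖ ^ 2 + ‖p - u‖ ^ 2 ≤ ‖w - u‖ ^ 2 + 2 * E * (‖w - p‖ + ‖p - u‖) + 6 * E ^ 2 := by
  have h₁ : ‖w - p‖ ^ 2 ≤ ‖w - v‖ ^ 2 + 2 * ‖p - v‖ * ‖w - p‖ + 3 * ‖p - v‖ ^ 2 := by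
    refine sq_le_sq_add_of_abs_sub_le (norm_nonneg _) ?_
    simpa [norm_sub_rev p v] using abs_norm_sub_norm_le (w - p) (w - v)
  have h₂ : ‖p - u‖ ^ 2 ≤ ‖v - u‖ ^ 2 + 2 * ‖p - v‖ * ‖p - u‖ + 3 * ‖p - v‖ ^ 2 := by
    refine sq_le_sq_add_of_abs_sub_le (norm_nonneg _) ?_
    simpa using abs_norm_sub_norm_le (p - u) (v - u)
  have hε := norm_nonneg (p - v)
  have hsum := add_nonneg (norm_nonneg (w - p)) (norm_nonneg (p - u))
  nlinarith [mul_le_mul_of_nonneg_right hp hsum, mul_le_mul hp hp hε (hε.trans hp)]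

theorem enorm2_eq_norm_toLp {d : ℕ} (p : EuclideanSpace ℝ (Fin d) × ℝ) :
    enorm2 p = ‖WithLp.toLp 2 p‖ := by
  simp [enorm2, WithLp.prod_norm_eq_of_L2, sq_abs]

theorem enorm2_sq {d : ℕ} (p : EuclideanSpace ℝ (Fin d) × ℝ) :
    enorm2 p ^ 2 = ‖p.1‖ ^ 2 + p.2 ^ 2 :=
  Real.sq_sqrt (by positivity)

theorem enorm2_sub_sq_shift {d : ℕ} (w : EuclideanSpace ℝ (Fin d) × ℝ)
    (y : EuclideanSpace ℝ (Fin d)) (s c : ℝ) :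
    enorm2 (w - (y, s - c)) ^ 2 = enorm2 (w - (y, s)) ^ 2 + 2 * c * (w.2 - s) + c ^ 2 := by
  simp only [enorm2_sq, Prod.fst_sub, Prod.snd_sub]
  ring

theorem Convex.enorm2_sub_sq_add_enorm2_sub_sq_le {d : ℕ}
    {Q : Set (EuclideanSpace ℝ (Fin d) × ℝ)} (hQ : Convex ℝ Q)
    {z ws w : EuclideanSpace ℝ (Fin d) × ℝ}
    (hws : ws ∈ Q) (hproj : ∀ w ∈ Q, enorm2 (ws - z) ≤ enorm2 (w - z)) (hw : w ∈ Q) :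
    enorm2 (ws - z) ^ 2 + enorm2 (w - ws) ^ 2 ≤ enorm2 (w - z) ^ 2 := by
  simp only [enorm2_eq_norm_toLp, WithLp.toLp_sub] at hproj ⊢
  exact (hQ.linear_preimage (WithLp.linearEquiv 2 ℝ _).toLinearMap).norm_sub_sq_add_norm_sub_sq_le
    hws (fun x hx => hproj x.ofLp hx) hw

theorem enorm2_sub_sq_add_enorm2_sub_sq_le_of_enorm2_sub_le {d : ℕ}
    {z ws w wt : EuclideanSpace ℝ (Fin d) × ℝ} {E : ℝ}
    (hpyth : enorm2 (ws - z) ^ 2 + enorm2 (w - ws) ^ 2 ≤ enorm2 (w - z) ^ 2)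
    (hwt : enorm2 (wt - ws) ≤ E) :
    enorm2 (w - wt) ^ 2 + enorm2 (wt - z) ^ 2
      ≤ enorm2 (w - z) ^ 2 + 2 * E * (enorm2 (w - wt) + enorm2 (wt - z)) + 6 * E ^ 2 := by
  simp only [enorm2_eq_norm_toLp, WithLp.toLp_sub] at hpyth hwt ⊢
  exact norm_sub_sq_add_norm_sub_sq_le_of_norm_sub_le hpyth hwt

theorem stmt_12_general {d : ℕ} (hd : 1 ≤ d) (η L : ℝ) (hη : 0 < η)
    (Q : Set (EuclideanSpace ℝ (Fin d) × ℝ))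
    (hQconv : Convex ℝ Q)
    (y : EuclideanSpace ℝ (Fin d)) (s : ℝ)
    (z : EuclideanSpace ℝ (Fin d) × ℝ) (hz : z = (y, s - d * η))
    (ws : EuclideanSpace ℝ (Fin d) × ℝ) (hws : ws ∈ Q)
    (hproj : ∀ w ∈ Q, enorm2 (ws - z) ≤ enorm2 (w - z))
    (wt : EuclideanSpace ℝ (Fin d) × ℝ)
    (hwt : enorm2 (wt - ws) ≤ (1 + L / d) * Real.sqrt (2 * η / (d + 1))) :
    ∀ w ∈ Q,
      (enorm2 (w - wt) ^ 2 + enorm2 (wt - z) ^ 2) / (2 * η)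
          - (Real.sqrt 2 * (L + d) / (d * Real.sqrt (η * (d + 1))))
              * (enorm2 (w - wt) + enorm2 (wt - z))
          - 6 * (L + d) ^ 2 / (d ^ 2 * (d + 1))
          + d * s - d ^ 2 * η / 2
        ≤ d * w.2 + (1 / (2 * η)) * enorm2 (w - (y, s)) ^ 2 := by
  intro w hw
  have hd₀ : (0 : ℝ) < d := Nat.cast_pos.2 hd
  have hd₁ : (0 : ℝ) < d + 1 := by linarith
  set E := (1 + L / d) * Real.sqrt (2 * η / (d + 1)) with hE
  have hlin : Real.sqrt 2 * (L + d) / (d * Real.sqrt (η * (d + 1))) = E / η := by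
    have := Real.sqrt_pos.2 hη
    have := Real.sqrt_pos.2 hd₁
    rw [hE, Real.sqrt_div' _ hd₁.le, Real.sqrt_mul' _ hd₁.le, Real.sqrt_mul' _ hη.le]
    field_simp
    rw [Real.sq_sqrt hη.le]
    ring
  have hconst : 6 * (L + d) ^ 2 / (d ^ 2 * (d + 1)) = 3 * E ^ 2 / η := by
    rw [hE, mul_pow, Real.sq_sqrt (by positivity)]
    field_simp
    ring
  have hperturbed := enorm2_sub_sq_add_enorm2_sub_sq_le_of_enorm2_sub_le
    (hQconv.enorm2_sub_sq_add_enorm2_sub_sq_le hws hproj hw) hwt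
  rw [hlin, hconst]
  calc _ = (enorm2 (w - wt) ^ 2 + enorm2 (wt - z) ^ 2
              - 2 * E * (enorm2 (w - wt) + enorm2 (wt - z)) - 6 * E ^ 2) / (2 * η)
            + d * s - d ^ 2 * η / 2 := by
        field_simp
        ring
    _ ≤ enorm2 (w - z) ^ 2 / (2 * η) + d * s - d ^ 2 * η / 2 := by
        gcongr
        linarith
    _ = d * w.2 + (1 / (2 * η)) * enorm2 (w - (y, s)) ^ 2 := by
        rw [hz, enorm2_sub_sq_shift]
        field_simp
        ring

/-- With the scaling `a = d`: if `w*` is the projection of `z = (y, s - dη)` onto the nonempty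
closed convex set `Q ⊆ ℝ^{d+1}` and `‖w̃ - w*‖ ≤ (1 + L/d)√(2η/(d+1))`, then the proposal
potential `P₁` lies below the RGO potential on `Q`: for all `w = (x,t) ∈ Q`,
`P₁(w) ≤ d t + (1/(2η))‖(x,t) - (y,s)‖²`. -/
theorem stmt_12 {d : ℕ} (hd : 1 ≤ d) (η L : ℝ) (hη : 0 < η) (hL : 0 ≤ L)
    (Q : Set (EuclideanSpace ℝ (Fin d) × ℝ)) (hQne : Q.Nonempty) (hQcl : IsClosed Q)
    (hQconv : Convex ℝ Q)
    (y : EuclideanSpace ℝ (Fin d)) (s : ℝ)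
    (z : EuclideanSpace ℝ (Fin d) × ℝ) (hz : z = (y, s - d * η))
    (ws : EuclideanSpace ℝ (Fin d) × ℝ) (hws : ws ∈ Q)
    (hproj : ∀ w ∈ Q, enorm2 (ws - z) ≤ enorm2 (w - z))
    (wt : EuclideanSpace ℝ (Fin d) × ℝ)
    (hwt : enorm2 (wt - ws) ≤ (1 + L / d) * Real.sqrt (2 * η / (d + 1))) :
    ∀ w ∈ Q,
      (enorm2 (w - wt) ^ 2 + enorm2 (wt - z) ^ 2) / (2 * η)
          - (Real.sqrt 2 * (L + d) / (d * Real.sqrt (η * (d + 1))))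
              * (enorm2 (w - wt) + enorm2 (wt - z))
          - 6 * (L + d) ^ 2 / (d ^ 2 * (d + 1))
          + d * s - d ^ 2 * η / 2
        ≤ d * w.2 + (1 / (2 * η)) * enorm2 (w - (y, s)) ^ 2 :=
  stmt_12_general hd η L hη Q hQconv y s z hz ws hws hproj wt hwt
end

section
/- Let d ≥ 1, a > 0, L > 0, R ≥ 1. Let K ⊆ ℝ^d be closed and convex with B(0,1) ⊆ K ⊆ B(0,R) (Euclidean balls), and let f : ℝ^d → ℝ be convex on K and L-Lipschitz on K. Let Q = {(x,t) ∈ ℝ^d × ℝ : x ∈ K, f(x) ≤ a t}, and for r ≥ 0 let Q_r = {w ∈ ℝ^{d+1} : dist(w, Q) ≤ r}. Then for every r ≥ 0, ∫_{Q_r} e^{-a t} dx dt ≤ e^{r·C_L} · ∫_{Q} e^{-a t} dx dt, where C_L = √(a² + L²) + L R + d. -/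
open MeasureTheory

/-- The Euclidean distance from a point of `ℝ^{d+1}` to a set. -/
noncomputable def edist2 {d : ℕ} (w : EuclideanSpace ℝ (Fin d) × ℝ)
    (Q : Set (EuclideanSpace ℝ (Fin d) × ℝ)) : ℝ :=
  sInf ((fun q => enorm2 (w - q)) '' Q)

/-!
Extend `f|_K` to an `L`-Lipschitz `g` on all of `ℝ^d` (McShane). A point `w` within distance `r`
of `Q` has `w.1` within `r` of `K`, hence `w.1 ∈ (1 + r) • K` because `K` is convex and contains
the unit ball; and by Cauchy–Schwarz on `a |Δt| + L ‖Δx‖`, `g w.1 - a w.2 ≤ r √(a² + L²)`.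
So `Q_r` lies in an envelope set. Integrating `e^{-at}` in `t` first turns both integrals into
`a⁻¹ ∫ e^{-g}` over `(1 + r) • K` and over `K`; the substitution `x = (1 + r) y` costs the Jacobian
`(1 + r)^d ≤ e^{rd}` and, as `K ⊆ B(0, R)`, changes `g` by at most `L r R`.
-/

open Metric Set
open scoped ENNReal NNReal Pointwise

section enorm2

variable {d : ℕ}

lemma norm_fst_le_enorm2 (p : EuclideanSpace ℝ (Fin d) × ℝ) : ‖p.1‖ ≤ enorm2 p :=
  Real.le_sqrt_of_sq_le (le_add_of_nonneg_right (sq_nonneg _))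

lemma mul_abs_snd_add_mul_norm_fst_le (a L : ℝ) (p : EuclideanSpace ℝ (Fin d) × ℝ) :
    a * |p.2| + L * ‖p.1‖ ≤ √(a ^ 2 + L ^ 2) * enorm2 p := by
  rw [enorm2, ← Real.sqrt_mul (by positivity)]
  apply Real.le_sqrt_of_sq_le
  nlinarith [sq_nonneg (a * ‖p.1‖ - L * |p.2|), sq_abs p.2]

lemma le_edist2_of_forall_le {w : EuclideanSpace ℝ (Fin d) × ℝ}
    {Q : Set (EuclideanSpace ℝ (Fin d) × ℝ)} (hQ : Q.Nonempty) {c : ℝ}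
    (h : ∀ q ∈ Q, c ≤ enorm2 (w - q)) : c ≤ edist2 w Q :=
  le_csInf (hQ.image _) (forall_mem_image.2 h)

end enorm2

lemma mem_one_add_smul_of_infDist_le {E : Type*} [NormedAddCommGroup E] [NormedSpace ℝ E]
    [ProperSpace E] {K : Set E} (hKcl : IsClosed K) (hKconv : Convex ℝ K)
    (hK1 : closedBall 0 1 ⊆ K) {r : ℝ} (hr : 0 ≤ r) {x : E} (hx : infDist x K ≤ r) :
    x ∈ (1 + r) • K := by
  obtain ⟨y, hy, hxy⟩ :=
    hKcl.exists_infDist_eq_dist ⟨0, hK1 (mem_closedBall_self zero_le_one)⟩ x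
  have hxy' : x - y ∈ r • K := by
    apply smul_set_mono hK1
    rw [smul_unitClosedBall, Real.norm_of_nonneg hr, mem_closedBall_zero_iff, ← dist_eq_norm]
    exact hxy ▸ hx
  rw [hKconv.add_smul zero_le_one hr, one_smul]
  simpa using add_mem_add hy hxy'

lemma setLIntegral_exp_neg_mul_setOf_le {a : ℝ} (ha : 0 < a) (c : ℝ) :
    ∫⁻ t in {t : ℝ | c ≤ a * t}, ENNReal.ofReal (Real.exp (-a * t))
      = ENNReal.ofReal (Real.exp (-c) / a) := by
  have hset : {t : ℝ | c ≤ a * t} = Ici (c / a) := by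
    ext t; simp [div_le_iff₀' ha]
  rw [hset, ← restrict_Ioi_eq_restrict_Ici,
    ← ofReal_integral_eq_lintegral_ofReal (exp_neg_integrableOn_Ioi _ ha)
      (ae_of_all _ fun t => (Real.exp_pos _).le),
    integral_exp_mul_Ioi (neg_neg_of_pos ha)]
  congr 1
  field_simp

lemma setLIntegral_exp_neg_mul_epigraph {X : Type*} [MeasurableSpace X] (μ : Measure X)
    [SFinite μ] {a : ℝ} (ha : 0 < a) {S : Set X} (hS : MeasurableSet S) {φ : X → ℝ}
    (hφ : Measurable φ) :
    ∫⁻ w in {w : X × ℝ | w.1 ∈ S ∧ φ w.1 ≤ a * w.2}, ENNReal.ofReal (Real.exp (-a * w.2))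
        ∂μ.prod volume
      = ENNReal.ofReal a⁻¹ * ∫⁻ x in S, ENNReal.ofReal (Real.exp (-φ x)) ∂μ := by
  have hepi : MeasurableSet {w : X × ℝ | φ w.1 ≤ a * w.2} :=
    measurableSet_le (hφ.comp measurable_fst) (measurable_snd.const_mul a)
  have hset : {w : X × ℝ | w.1 ∈ S ∧ φ w.1 ≤ a * w.2} = {w | φ w.1 ≤ a * w.2} ∩ S ×ˢ univ := by
    ext; simp [and_comm]
  rw [hset, ← Measure.restrict_restrict' (hS.prod MeasurableSet.univ),
    ← Measure.restrict_prod_eq_prod_univ, ← lintegral_indicator hepi,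
    lintegral_prod _ (by fun_prop (disch := exact hepi)),
    ← lintegral_const_mul' _ _ ENNReal.ofReal_ne_top]
  refine lintegral_congr fun x => ?_
  change ∫⁻ t, {t : ℝ | φ x ≤ a * t}.indicator
    (fun t => ENNReal.ofReal (Real.exp (-a * t))) t = _
  rw [lintegral_indicator (measurableSet_le measurable_const (measurable_const_mul a)),
    setLIntegral_exp_neg_mul_setOf_le ha, ← ENNReal.ofReal_mul (by positivity), inv_mul_eq_div]

lemma setLIntegral_smul_set {E : Type*} [NormedAddCommGroup E] [NormedSpace ℝ E]
    [MeasurableSpace E] [BorelSpace E] [FiniteDimensional ℝ E] (μ : Measure E)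
    [μ.IsAddHaarMeasure] {c : ℝ} (hc : 0 < c) (s : Set E) (G : E → ℝ≥0∞) :
    ∫⁻ x in c • s, G x ∂μ
      = ENNReal.ofReal (c ^ Module.finrank ℝ E) * ∫⁻ y in s, G (c • y) ∂μ := by
  have hscale : MeasurePreserving (c • · : E → E) μ
      (ENNReal.ofReal |(c ^ Module.finrank ℝ E)⁻¹| • μ) :=
    ⟨measurable_const_smul c, Measure.map_addHaar_smul μ hc.ne'⟩
  rw [hscale.setLIntegral_comp_emb (measurableEmbedding_const_smul₀ hc.ne'), image_smul,
    Measure.restrict_smul, lintegral_smul_measure, smul_eq_mul, ← mul_assoc,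
    abs_of_pos (by positivity), ENNReal.ofReal_inv_of_pos (by positivity),
    ENNReal.mul_inv_cancel (by positivity) ENNReal.ofReal_ne_top, one_mul]

lemma setLIntegral_exp_neg_one_add_smul_le {E : Type*} [NormedAddCommGroup E]
    [NormedSpace ℝ E] [MeasurableSpace E] [BorelSpace E] [FiniteDimensional ℝ E]
    (μ : Measure E) [μ.IsAddHaarMeasure] {K : Set E} {R : ℝ} (hKR : K ⊆ closedBall 0 R)
    {L : ℝ≥0} {g : E → ℝ} (hg : LipschitzWith L g) {r : ℝ} (hr : 0 ≤ r) :
    ∫⁻ x in (1 + r) • K, ENNReal.ofReal (Real.exp (-g x)) ∂μ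
      ≤ ENNReal.ofReal (Real.exp (r * (L * R + Module.finrank ℝ E)))
        * ∫⁻ y in K, ENNReal.ofReal (Real.exp (-g y)) ∂μ := by
  have hpow : (1 + r) ^ Module.finrank ℝ E ≤ Real.exp (r * Module.finrank ℝ E) := by
    rw [Real.exp_mul, Real.rpow_natCast]
    exact pow_le_pow_left₀ (by linarith) (by linarith [Real.add_one_le_exp r]) _
  have hpt : ∀ y ∈ K, -g ((1 + r) • y) ≤ r * L * R - g y := by
    intro y hy
    have hlip := hg.dist_le_mul ((1 + r) • y) y
    rw [Real.dist_eq, dist_eq_norm, show (1 + r) • y - y = r • y by module, norm_smul,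
      Real.norm_of_nonneg hr] at hlip
    have hyR : ‖y‖ ≤ R := mem_closedBall_zero_iff.1 (hKR hy)
    have hLy : (L : ℝ) * (r * ‖y‖) ≤ r * L * R := by
      rw [mul_left_comm, mul_assoc]; gcongr
    linarith [(abs_le.1 hlip).1]
  rw [setLIntegral_smul_set μ (by linarith) K, ← lintegral_const_mul' _ _ ENNReal.ofReal_ne_top,
    ← lintegral_const_mul' _ _ ENNReal.ofReal_ne_top]
  refine setLIntegral_mono (by have := hg.continuous; fun_prop) fun y hy => ?_
  rw [← ENNReal.ofReal_mul (by positivity), ← ENNReal.ofReal_mul (by positivity)]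
  refine ENNReal.ofReal_le_ofReal ?_
  calc (1 + r) ^ Module.finrank ℝ E * Real.exp (-g ((1 + r) • y))
      ≤ Real.exp (r * Module.finrank ℝ E) * Real.exp (r * L * R - g y) := by
        gcongr
        exact hpt y hy
    _ = Real.exp (r * (L * R + Module.finrank ℝ E)) * Real.exp (-g y) := by
        rw [← Real.exp_add, ← Real.exp_add]; ring_nf

lemma setLIntegral_exp_neg_mul_envelope_le {E : Type*} [NormedAddCommGroup E]
    [NormedSpace ℝ E] [MeasurableSpace E] [BorelSpace E] [FiniteDimensional ℝ E]
    (μ : Measure E) [μ.IsAddHaarMeasure] {a : ℝ} (ha : 0 < a) {K : Set E}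
    (hK : MeasurableSet K) {R : ℝ} (hKR : K ⊆ closedBall 0 R) {L : ℝ≥0} {g : E → ℝ}
    (hg : LipschitzWith L g) {r : ℝ} (hr : 0 ≤ r) (σ : ℝ) :
    ∫⁻ w in {w : E × ℝ | w.1 ∈ (1 + r) • K ∧ g w.1 - r * σ ≤ a * w.2},
        ENNReal.ofReal (Real.exp (-a * w.2)) ∂μ.prod volume
      ≤ ENNReal.ofReal (Real.exp (r * (σ + L * R + Module.finrank ℝ E)))
        * ∫⁻ w in {w : E × ℝ | w.1 ∈ K ∧ g w.1 ≤ a * w.2},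
            ENNReal.ofReal (Real.exp (-a * w.2)) ∂μ.prod volume := by
  have hgm := hg.continuous.measurable
  rw [setLIntegral_exp_neg_mul_epigraph μ ha (hK.const_smul₀ _) (hgm.sub_const _),
    setLIntegral_exp_neg_mul_epigraph μ ha hK hgm, mul_left_comm]
  gcongr
  calc ∫⁻ x in (1 + r) • K, ENNReal.ofReal (Real.exp (-(g x - r * σ))) ∂μ
      = ENNReal.ofReal (Real.exp (r * σ))
          * ∫⁻ x in (1 + r) • K, ENNReal.ofReal (Real.exp (-g x)) ∂μ := by
        rw [← lintegral_const_mul' _ _ ENNReal.ofReal_ne_top]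
        refine lintegral_congr fun x => ?_
        rw [← ENNReal.ofReal_mul (Real.exp_pos _).le, ← Real.exp_add]
        ring_nf
    _ ≤ ENNReal.ofReal (Real.exp (r * σ))
          * (ENNReal.ofReal (Real.exp (r * (L * R + Module.finrank ℝ E)))
            * ∫⁻ y in K, ENNReal.ofReal (Real.exp (-g y)) ∂μ) := by
        grw [setLIntegral_exp_neg_one_add_smul_le μ hKR hg hr]
    _ = _ := by
        rw [← mul_assoc, ← ENNReal.ofReal_mul (Real.exp_pos _).le, ← Real.exp_add]
        ring_nf

lemma setOf_edist2_le_subset_envelope {d : ℕ} {a : ℝ} (ha : 0 < a)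
    {K : Set (EuclideanSpace ℝ (Fin d))} (hK : K.Nonempty) {f g : EuclideanSpace ℝ (Fin d) → ℝ}
    {L : ℝ≥0} (hg : LipschitzWith L g) (hfg : EqOn f g K) (r : ℝ) :
    {w : EuclideanSpace ℝ (Fin d) × ℝ | edist2 w {q | q.1 ∈ K ∧ f q.1 ≤ a * q.2} ≤ r}
      ⊆ {w | infDist w.1 K ≤ r ∧ g w.1 - r * √(a ^ 2 + L ^ 2) ≤ a * w.2} := by
  intro w hw
  obtain ⟨x, hx⟩ := hK
  have hQ : {q : EuclideanSpace ℝ (Fin d) × ℝ | q.1 ∈ K ∧ f q.1 ≤ a * q.2}.Nonempty :=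
    ⟨(x, f x / a), hx, by rw [mul_div_cancel₀ _ ha.ne']⟩
  have hσ : 0 < √(a ^ 2 + L ^ 2) := by positivity
  constructor
  · refine le_trans (le_edist2_of_forall_le hQ fun q hq => ?_) hw
    exact (infDist_le_dist_of_mem hq.1).trans
      (by simpa [dist_eq_norm] using norm_fst_le_enorm2 (w - q))
  · have hdiv : (g w.1 - a * w.2) / √(a ^ 2 + L ^ 2) ≤ r := by
      refine le_trans (le_edist2_of_forall_le hQ fun q hq => ?_) hw
      rw [div_le_iff₀' hσ]
      have hlip := hg.dist_le_mul w.1 q.1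
      have hcs := mul_abs_snd_add_mul_norm_fst_le a L (w - q)
      rw [Real.dist_eq, dist_eq_norm] at hlip
      simp only [Prod.fst_sub, Prod.snd_sub] at hcs
      have hgq : g q.1 ≤ a * q.2 := hfg hq.1 ▸ hq.2
      have hat : a * (q.2 - w.2) ≤ a * |w.2 - q.2| := by
        gcongr; rw [abs_sub_comm]; exact le_abs_self _
      linarith [(abs_le.1 hlip).2]
    rw [div_le_iff₀ hσ] at hdiv
    linarith

theorem stmt_14_general {d : ℕ} (a L R : ℝ) (ha : 0 < a) (hL : 0 < L)
    (K : Set (EuclideanSpace ℝ (Fin d))) (hKcl : IsClosed K) (hKconv : Convex ℝ K)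
    (hK1 : Metric.closedBall (0 : EuclideanSpace ℝ (Fin d)) 1 ⊆ K)
    (hKR : K ⊆ Metric.closedBall (0 : EuclideanSpace ℝ (Fin d)) R)
    (f : EuclideanSpace ℝ (Fin d) → ℝ)
    (hfL : ∀ u ∈ K, ∀ v ∈ K, |f u - f v| ≤ L * ‖u - v‖)
    (r : ℝ) (hr : 0 ≤ r) :
    ∫⁻ w in {w : EuclideanSpace ℝ (Fin d) × ℝ |
        edist2 w {q : EuclideanSpace ℝ (Fin d) × ℝ | q.1 ∈ K ∧ f q.1 ≤ a * q.2} ≤ r},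
      ENNReal.ofReal (Real.exp (-a * w.2))
    ≤ ENNReal.ofReal (Real.exp (r * (Real.sqrt (a ^ 2 + L ^ 2) + L * R + d)))
      * ∫⁻ w in {w : EuclideanSpace ℝ (Fin d) × ℝ | w.1 ∈ K ∧ f w.1 ≤ a * w.2},
          ENNReal.ofReal (Real.exp (-a * w.2)) := by
  lift L to ℝ≥0 using hL.le
  obtain ⟨g, hg, hfg⟩ := (LipschitzOnWith.of_dist_le_mul (f := f) fun u hu v hv => by
    rw [Real.dist_eq, dist_eq_norm]; exact hfL u hu v hv).extend_real
  have hQ : {w : EuclideanSpace ℝ (Fin d) × ℝ | w.1 ∈ K ∧ f w.1 ≤ a * w.2}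
      = {w | w.1 ∈ K ∧ g w.1 ≤ a * w.2} :=
    ext fun w => and_congr_right fun hw => by rw [hfg hw]
  have key := setLIntegral_exp_neg_mul_envelope_le volume ha hKcl.measurableSet hKR hg hr
    √(a ^ 2 + L ^ 2)
  rw [finrank_euclideanSpace_fin, ← Measure.volume_eq_prod, ← hQ] at key
  refine (lintegral_mono_set ?_).trans key
  have hK : K.Nonempty := ⟨0, hK1 (mem_closedBall_self zero_le_one)⟩
  exact (setOf_edist2_le_subset_envelope ha hK hg hfg r).trans
    fun w hw => ⟨mem_one_add_smul_of_infDist_le hKcl hKconv hK1 hr hw.1, hw.2⟩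

/-- Envelope estimate: for `Q = {(x,t) : x ∈ K, f x ≤ a t}` with `B(0,1) ⊆ K ⊆ B(0,R)` and
`f` convex and `L`-Lipschitz on `K`, the parallel sets `Q_r` satisfy
`∫_{Q_r} e^{-at} ≤ e^{r C_L} ∫_Q e^{-at}` with `C_L = √(a² + L²) + L R + d`. -/
theorem stmt_14 {d : ℕ} (hd : 1 ≤ d) (a L R : ℝ) (ha : 0 < a) (hL : 0 < L) (hR : 1 ≤ R)
    (K : Set (EuclideanSpace ℝ (Fin d))) (hKcl : IsClosed K) (hKconv : Convex ℝ K)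
    (hK1 : Metric.closedBall (0 : EuclideanSpace ℝ (Fin d)) 1 ⊆ K)
    (hKR : K ⊆ Metric.closedBall (0 : EuclideanSpace ℝ (Fin d)) R)
    (f : EuclideanSpace ℝ (Fin d) → ℝ) (hfc : ConvexOn ℝ K f)
    (hfL : ∀ u ∈ K, ∀ v ∈ K, |f u - f v| ≤ L * ‖u - v‖)
    (r : ℝ) (hr : 0 ≤ r) :
    ∫⁻ w in {w : EuclideanSpace ℝ (Fin d) × ℝ |
        edist2 w {q : EuclideanSpace ℝ (Fin d) × ℝ | q.1 ∈ K ∧ f q.1 ≤ a * q.2} ≤ r},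
      ENNReal.ofReal (Real.exp (-a * w.2))
    ≤ ENNReal.ofReal (Real.exp (r * (Real.sqrt (a ^ 2 + L ^ 2) + L * R + d)))
      * ∫⁻ w in {w : EuclideanSpace ℝ (Fin d) × ℝ | w.1 ∈ K ∧ f w.1 ≤ a * w.2},
          ENNReal.ofReal (Real.exp (-a * w.2)) :=
  stmt_14_general a L R ha hL K hKcl hKconv hK1 hKR f hfL r hr
end

section
/- Let d ≥ 1, a > 0, b > 0, η > 0 and τ ≥ 0. Let f, h : ℝ^d → ℝ be Lipschitz continuous with constants L_f and L_h respectively, and assume ∫_{ℝ^d} e^{-f(x)-h(x)} dx < ∞. Let Q̃ = {(x,s,t) ∈ ℝ^d × ℝ × ℝ : h(x) ≤ a s, f(x) + a s ≤ b t}, set Z_{Q̃} = ∫_{Q̃} e^{-b t} dx ds dt, C̃_f = √(b² + a² + L_f²), C̃_h = √(a² + L_h²), and C̃_L = C̃_f + C̃_h. Then ∫_{ℝ^{d+2}} e^{-b q_{d+2}} · exp(−(dist(q, Q̃) − τ)²/(2η)) dq ≤ Z_{Q̃} · e^{τ C̃_L} · [ C̃_L·√(2πη)·e^{η C̃_L²/2}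 + 1 ], where q_{d+2} denotes the last coordinate of q ∈ ℝ^{d+2}. -/
/-!
Put `C_h = √(a² + L_h²)`, `C_f = √(b² + a² + L_f²)` and `C = C_f + C_h`. The constraint
functions `h x - a s` and `f x + a s - b t` of `Q̃` are `C_h`- and `C_f`-Lipschitz on `ℝ^{d+2}`,
so the normalised violation `G q = max ((h x - a s)/C_h) ((f x + a s - b t)/C_f)` is at most
`dist(q, Q̃)`, and the Gaussian factor is at most `exp (-((G q - τ)⁺)² / (2η)) = ∫_{G q}^∞ ρ`, where
`ρ` is the density of `τ` plus a Rayleigh variable. By Tonelli the integral becomes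
`∫ ρ(r) ∫_{G < r} e^{-b t} dq dr`; translating `{G < r}` by `(0, C_h r / a, C r / b)` moves it
into `Q̃` at the cost of a factor `e^{C r}`. What is left, `∫ ρ(r) e^{C r} dr`, is computed by one
integration by parts and a Gaussian integral.
-/

open MeasureTheory

/-- The Euclidean norm of a point of `ℝ^d × ℝ × ℝ ≅ ℝ^{d+2}`. -/
noncomputable def enorm3 {d : ℕ} (p : EuclideanSpace ℝ (Fin d) × ℝ × ℝ) : ℝ :=
  Real.sqrt (‖p.1‖ ^ 2 + p.2.1 ^ 2 + p.2.2 ^ 2)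

/-- The Euclidean distance from a point of `ℝ^{d+2}` to a set. -/
noncomputable def edist3 {d : ℕ} (q : EuclideanSpace ℝ (Fin d) × ℝ × ℝ)
    (Q : Set (EuclideanSpace ℝ (Fin d) × ℝ × ℝ)) : ℝ :=
  sInf ((fun p => enorm3 (q - p)) '' Q)

open Real Set Filter Topology
open scoped ENNReal

section Gaussian

variable {η : ℝ}

theorem exp_linear_sub_sq_eq (hη : η ≠ 0) (τ C r : ℝ) :
    exp (C * r - (r - τ) ^ 2 / (2 * η))
      = exp (C * τ + η * C ^ 2 / 2) * exp (-(r - (τ + η * C)) ^ 2 / (2 * η)) := by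
  rw [← exp_add]
  congr 1
  field_simp
  ring

theorem integrable_affine_mul_exp_linear_sub_sq (hη : 0 < η) (τ C α β : ℝ) :
    Integrable fun r => (α * r + β) * exp (C * r - (r - τ) ^ 2 / (2 * η)) := by
  set m := τ + η * C
  have hc : 0 < 1 / (2 * η) := by positivity
  have h₁ := ((integrable_mul_exp_neg_mul_sq hc).comp_sub_right m).const_mul α
  have h₂ := ((integrable_exp_neg_mul_sq hc).comp_sub_right m).const_mul (α * m + β)
  refine ((h₁.add h₂).const_mul (exp (C * τ + η * C ^ 2 / 2))).congr
    (Eventually.of_forall fun r => ?_)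
  simp only [Pi.add_apply, exp_linear_sub_sq_eq hη.ne']
  rw [show -(1 / (2 * η)) * (r - m) ^ 2 = -(r - m) ^ 2 / (2 * η) by ring]
  ring

theorem integral_exp_linear_sub_sq (hη : 0 < η) (τ C : ℝ) :
    ∫ r, exp (C * r - (r - τ) ^ 2 / (2 * η)) = exp (C * τ + η * C ^ 2 / 2) * √(2 * π * η) := by
  simp only [exp_linear_sub_sq_eq hη.ne']
  rw [integral_const_mul,
    integral_sub_right_eq_self (fun r => exp (-r ^ 2 / (2 * η))) (τ + η * C)]
  have hgauss : (fun r : ℝ => exp (-r ^ 2 / (2 * η))) = fun r => exp (-(1 / (2 * η)) * r ^ 2) :=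
    funext fun r => by ring_nf
  rw [hgauss, integral_gaussian]
  congr 2
  field_simp

theorem integral_Ioi_deriv_exp_linear_sub_sq (hη : 0 < η) (τ C x : ℝ) :
    ∫ r in Ioi x, ((r - τ) / η - C) * exp (C * r - (r - τ) ^ 2 / (2 * η))
      = exp (C * x - (x - τ) ^ 2 / (2 * η)) := by
  have hderiv (r : ℝ) : HasDerivAt (fun r => -exp (C * r - (r - τ) ^ 2 / (2 * η)))
      (((r - τ) / η - C) * exp (C * r - (r - τ) ^ 2 / (2 * η))) r := by
    have := (((hasDerivAt_id' r).const_mul C).sub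
      ((((hasDerivAt_id' r).sub_const τ).pow 2).div_const (2 * η))).exp.neg
    refine (this : HasDerivAt (fun r => -exp (C * r - (r - τ) ^ 2 / (2 * η))) _ r).congr_deriv ?_
    simp only [Pi.sub_apply, Pi.pow_apply]
    field_simp
    ring
  have hint : Integrable fun r => ((r - τ) / η - C) * exp (C * r - (r - τ) ^ 2 / (2 * η)) := by
    convert integrable_affine_mul_exp_linear_sub_sq hη τ C (1 / η) (-τ / η - C) using 2
    ring
  have hlim : Tendsto (fun r => -exp (C * r - (r - τ) ^ 2 / (2 * η))) atTop (𝓝 0) := by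
    have hsq : Tendsto (fun r => (r - (τ + η * C)) ^ 2 / (2 * η)) atTop atTop :=
      ((tendsto_pow_atTop two_ne_zero).comp
        (tendsto_atTop_add_const_right _ _ tendsto_id)).atTop_div_const (by positivity)
    have := ((tendsto_exp_atBot.comp (tendsto_neg_atTop_atBot.comp hsq)).const_mul
      (exp (C * τ + η * C ^ 2 / 2))).neg
    simpa [exp_linear_sub_sq_eq hη.ne', neg_div] using this
  rw [integral_Ioi_of_hasDerivAt_of_tendsto' (fun r _ => hderiv r) hint.integrableOn hlim]
  ring

theorem setIntegral_Ioi_mul_exp_linear_sub_sq_le (hη : 0 < η) (τ : ℝ) {C : ℝ} (hC : 0 ≤ C) :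
    ∫ r in Ioi τ, (r - τ) / η * exp (C * r - (r - τ) ^ 2 / (2 * η))
      ≤ exp (τ * C) * (C * √(2 * π * η) * exp (η * C ^ 2 / 2) + 1) := by
  set k : ℝ → ℝ := fun r => exp (C * r - (r - τ) ^ 2 / (2 * η))
  have hk : Integrable k := by
    simpa using integrable_affine_mul_exp_linear_sub_sq hη τ C 0 1
  have hk_le : ∫ r in Ioi τ, k r ≤ exp (C * τ + η * C ^ 2 / 2) * √(2 * π * η) :=
    (setIntegral_le_integral hk (Eventually.of_forall fun r => (exp_pos _).le)).trans_eq
      (integral_exp_linear_sub_sq hη τ C)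
  calc ∫ r in Ioi τ, (r - τ) / η * k r
      = exp (C * τ) + C * ∫ r in Ioi τ, k r := by
        -- integration by parts: `(r - τ)/η · k = ((r - τ)/η - C) · k + C · k`
        have hderiv := integral_Ioi_deriv_exp_linear_sub_sq hη τ C τ
        rw [sub_self, zero_pow two_ne_zero, zero_div, sub_zero] at hderiv
        rw [← hderiv, ← integral_const_mul, ← integral_add]
        · congr 1 with r
          ring
        · refine Integrable.integrableOn ?_
          convert integrable_affine_mul_exp_linear_sub_sq hη τ C (1 / η) (-τ / η - C) using 2
          ring
        · exact (hk.const_mul C).integrableOn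
    _ ≤ exp (C * τ) + C * (exp (C * τ + η * C ^ 2 / 2) * √(2 * π * η)) := by gcongr
    _ = exp (τ * C) * (C * √(2 * π * η) * exp (η * C ^ 2 / 2) + 1) := by
      rw [exp_add, mul_comm τ C]
      ring

end Gaussian

section Rayleigh

variable {η : ℝ}

/-- The density of `τ + R`, where `R` is Rayleigh distributed with scale `√η`. -/
noncomputable def rayleighDensity (η τ : ℝ) : ℝ → ℝ≥0∞ :=
  (Ioi τ).indicator fun r => ENNReal.ofReal ((r - τ) / η * exp (-(r - τ) ^ 2 / (2 * η)))

@[fun_prop]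
theorem measurable_rayleighDensity (η τ : ℝ) : Measurable (rayleighDensity η τ) :=
  Measurable.indicator (by fun_prop) measurableSet_Ioi

theorem lintegral_Ioi_rayleighDensity (hη : 0 < η) (τ x : ℝ) :
    ∫⁻ r in Ioi x, rayleighDensity η τ r = ENNReal.ofReal (exp (-(max τ x - τ) ^ 2 / (2 * η))) := by
  have hint : Integrable fun r => (r - τ) / η * exp (-(r - τ) ^ 2 / (2 * η)) := by
    convert integrable_affine_mul_exp_linear_sub_sq hη τ 0 (1 / η) (-τ / η) using 2 with r
    ring_nf
  have hnonneg : ∀ᵐ r ∂volume.restrict (Ioi (max τ x)),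
      0 ≤ (r - τ) / η * exp (-(r - τ) ^ 2 / (2 * η)) := by
    filter_upwards [self_mem_ae_restrict measurableSet_Ioi] with r hr
    have : 0 ≤ r - τ := by linarith [(le_max_left τ x).trans_lt hr]
    positivity
  rw [rayleighDensity, setLIntegral_indicator measurableSet_Ioi, Ioi_inter_Ioi,
    ← ofReal_integral_eq_lintegral_ofReal hint.integrableOn hnonneg]
  congr 1
  simpa [neg_div] using integral_Ioi_deriv_exp_linear_sub_sq hη τ 0 (max τ x)

theorem ofReal_exp_le_lintegral_Ioi_rayleighDensity (hη : 0 < η) (τ : ℝ) {x y : ℝ} (hxy : x ≤ y) :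
    ENNReal.ofReal (exp (-(y - τ) ^ 2 / (2 * η))) ≤ ∫⁻ r in Ioi x, rayleighDensity η τ r := by
  rw [lintegral_Ioi_rayleighDensity hη]
  have hsq : (max τ x - τ) ^ 2 ≤ (y - τ) ^ 2 := by
    rcases le_total x τ with h | h
    · simp [max_eq_left h, sq_nonneg]
    · rw [max_eq_right h]
      exact pow_le_pow_left₀ (by linarith) (by linarith) 2
  gcongr

theorem lintegral_rayleighDensity_mul_exp_le (hη : 0 < η) (τ : ℝ) {C : ℝ} (hC : 0 ≤ C) :
    ∫⁻ r, rayleighDensity η τ r * ENNReal.ofReal (exp (C * r))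
      ≤ ENNReal.ofReal (exp (τ * C) * (C * √(2 * π * η) * exp (η * C ^ 2 / 2) + 1)) := by
  set k : ℝ → ℝ := fun r => exp (C * r - (r - τ) ^ 2 / (2 * η))
  have hint : Integrable fun r => (r - τ) / η * k r := by
    convert integrable_affine_mul_exp_linear_sub_sq hη τ C (1 / η) (-τ / η) using 2 with r
    ring
  have hnonneg : ∀ᵐ r ∂volume.restrict (Ioi τ), 0 ≤ (r - τ) / η * k r := by
    filter_upwards [self_mem_ae_restrict measurableSet_Ioi] with r (hr : τ < r)
    have : 0 ≤ r - τ := by linarith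
    positivity
  refine le_of_eq_of_le ?_
    (ENNReal.ofReal_le_ofReal (setIntegral_Ioi_mul_exp_linear_sub_sq_le hη τ hC))
  rw [ofReal_integral_eq_lintegral_ofReal hint.integrableOn hnonneg,
    ← lintegral_indicator measurableSet_Ioi]
  refine lintegral_congr fun r => ?_
  by_cases hr : r ∈ Ioi τ
  · have : 0 ≤ r - τ := by linarith [mem_Ioi.1 hr]
    simp only [rayleighDensity, indicator_of_mem hr, k]
    rw [← ENNReal.ofReal_mul (by positivity), mul_assoc, ← exp_add]
    ring_nf
  · simp [rayleighDensity, hr]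

end Rayleigh

theorem lintegral_mul_setLIntegral_Ioi_eq {α : Type*} [MeasurableSpace α] {μ : Measure α}
    [SFinite μ] {w : α → ℝ≥0∞} {G : α → ℝ} {φ : ℝ → ℝ≥0∞} (hw : Measurable w)
    (hG : Measurable G) (hφ : Measurable φ) :
    ∫⁻ q, w q * (∫⁻ r in Ioi (G q), φ r) ∂μ = ∫⁻ r, (∫⁻ q in {q | G q < r}, w q ∂μ) * φ r := by
  set K : α × ℝ → ℝ≥0∞ := {p | G p.1 < p.2}.indicator fun p => w p.1 * φ p.2
  have hK : Measurable K := ((hw.comp measurable_fst).mul (hφ.comp measurable_snd)).indicator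
    (measurableSet_lt (hG.comp measurable_fst) measurable_snd)
  calc ∫⁻ q, w q * (∫⁻ r in Ioi (G q), φ r) ∂μ = ∫⁻ q, (∫⁻ r, K (q, r)) ∂μ := by
        refine lintegral_congr fun q => ?_
        rw [← lintegral_const_mul _ hφ, ← lintegral_indicator measurableSet_Ioi]
        rfl
    _ = ∫⁻ r, ∫⁻ q, K (q, r) ∂μ := lintegral_lintegral_swap hK.aemeasurable
    _ = ∫⁻ r, (∫⁻ q in {q | G q < r}, w q ∂μ) * φ r := by
        refine lintegral_congr fun r => ?_
        rw [← lintegral_mul_const _ hw,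
          ← lintegral_indicator (measurableSet_lt hG measurable_const)]
        rfl

theorem setLIntegral_exp_neg_le_of_translate_mem {E : Type*} [MeasureSpace E]
    [SFinite (volume : Measure E)] {S Q : Set (E × ℝ × ℝ)} {b c₁ c₂ : ℝ}
    (hSQ : ∀ q ∈ S, (q.1, q.2.1 + c₁, q.2.2 + c₂) ∈ Q) :
    ∫⁻ q in S, ENNReal.ofReal (exp (-b * q.2.2))
      ≤ ENNReal.ofReal (exp (b * c₂)) * ∫⁻ p in Q, ENNReal.ofReal (exp (-b * p.2.2)) := by
  set T : E × ℝ × ℝ → E × ℝ × ℝ := Prod.map id (Prod.map (· + c₁) (· + c₂))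
  have hT : MeasurePreserving T := (MeasurePreserving.id volume).prod
    ((measurePreserving_add_right volume c₁).prod (measurePreserving_add_right volume c₂))
  have hTemb : MeasurableEmbedding T := MeasurableEmbedding.id.prodMap
    ((measurableEmbedding_addRight c₁).prodMap (measurableEmbedding_addRight c₂))
  calc ∫⁻ q in S, ENNReal.ofReal (exp (-b * q.2.2))
      ≤ ∫⁻ q in T ⁻¹' Q, ENNReal.ofReal (exp (-b * q.2.2)) := lintegral_mono_set hSQ
    _ = ∫⁻ q in T ⁻¹' Q, ENNReal.ofReal (exp (b * c₂)) * ENNReal.ofReal (exp (-b * (T q).2.2)) := by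
        refine lintegral_congr fun q => ?_
        rw [← ENNReal.ofReal_mul (exp_pos _).le, ← exp_add]
        simp only [T, Prod.map_snd]
        ring_nf
    _ = ENNReal.ofReal (exp (b * c₂)) * ∫⁻ p in Q, ENNReal.ofReal (exp (-b * p.2.2)) := by
        rw [lintegral_const_mul' _ _ ENNReal.ofReal_ne_top,
          hT.setLIntegral_comp_preimage_emb hTemb (fun p => ENNReal.ofReal (exp (-b * p.2.2)))]

theorem continuous_of_abs_sub_le_mul_norm {E : Type*} [SeminormedAddCommGroup E] {F : E → ℝ}
    {L : ℝ} (hF : ∀ u v, |F u - F v| ≤ L * ‖u - v‖) : Continuous F :=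
  (LipschitzWith.of_dist_le' fun u v => by
    simpa [Real.dist_eq, dist_eq_norm] using hF u v).continuous

theorem dot_le_sqrt_mul_sqrt (x₁ x₂ x₃ y₁ y₂ y₃ : ℝ) :
    x₁ * y₁ + x₂ * y₂ + x₃ * y₃ ≤ √(x₁ ^ 2 + x₂ ^ 2 + x₃ ^ 2) * √(y₁ ^ 2 + y₂ ^ 2 + y₃ ^ 2) := by
  rw [← sqrt_mul (by positivity)]
  refine (le_abs_self _).trans (abs_le_sqrt ?_)
  nlinarith [sq_nonneg (x₁ * y₂ - x₂ * y₁), sq_nonneg (x₁ * y₃ - x₃ * y₁),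
    sq_nonneg (x₂ * y₃ - x₃ * y₂)]

section DoubleEpigraph

variable {E : Type*} (f h : E → ℝ) (a b : ℝ)

def doubleEpigraph : Set (E × ℝ × ℝ) :=
  {p | h p.1 ≤ a * p.2.1 ∧ f p.1 + a * p.2.1 ≤ b * p.2.2}

noncomputable def doubleEpigraphGap (Cf Ch : ℝ) (q : E × ℝ × ℝ) : ℝ :=
  max ((h q.1 - a * q.2.1) / Ch) ((f q.1 + a * q.2.1 - b * q.2.2) / Cf)

variable {f h a b}

theorem continuous_doubleEpigraphGap [TopologicalSpace E] (hf : Continuous f)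
    (hh : Continuous h) (Cf Ch : ℝ) : Continuous (doubleEpigraphGap f h a b Cf Ch) := by
  unfold doubleEpigraphGap
  fun_prop

theorem doubleEpigraph_nonempty [Nonempty E] (ha : a ≠ 0) (hb : b ≠ 0) :
    (doubleEpigraph f h a b).Nonempty := by
  obtain ⟨x⟩ := ‹Nonempty E›
  refine ⟨(x, h x / a, (f x + h x) / b), ?_, ?_⟩ <;>
    simp [mul_div_cancel₀ _ ha, mul_div_cancel₀ _ hb]

theorem translate_mem_doubleEpigraph_of_gap_lt (ha : a ≠ 0) (hb : b ≠ 0) {Cf Ch : ℝ}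
    (hCf : 0 < Cf) (hCh : 0 < Ch) {q : E × ℝ × ℝ} {r : ℝ}
    (hq : doubleEpigraphGap f h a b Cf Ch q < r) :
    (q.1, q.2.1 + Ch * r / a, q.2.2 + (Cf + Ch) * r / b) ∈ doubleEpigraph f h a b := by
  obtain ⟨hh, hf⟩ := max_lt_iff.1 hq
  rw [div_lt_iff₀ hCh] at hh
  rw [div_lt_iff₀ hCf] at hf
  constructor <;> simp only [mul_add, mul_div_cancel₀ _ ha, mul_div_cancel₀ _ hb] <;> linarith

theorem setLIntegral_doubleEpigraphGap_lt_le [MeasureSpace E] [SFinite (volume : Measure E)]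
    (ha : a ≠ 0) (hb : b ≠ 0) {Cf Ch : ℝ} (hCf : 0 < Cf) (hCh : 0 < Ch) (r : ℝ) :
    ∫⁻ q in {q | doubleEpigraphGap f h a b Cf Ch q < r}, ENNReal.ofReal (exp (-b * q.2.2))
      ≤ ENNReal.ofReal (exp ((Cf + Ch) * r))
        * ∫⁻ p in doubleEpigraph f h a b, ENNReal.ofReal (exp (-b * p.2.2)) := by
  have := setLIntegral_exp_neg_le_of_translate_mem (b := b)
    fun q (hq : q ∈ {q | doubleEpigraphGap f h a b Cf Ch q < r}) =>
      translate_mem_doubleEpigraph_of_gap_lt ha hb hCf hCh hq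
  rwa [mul_div_cancel₀ _ hb] at this

end DoubleEpigraph

section Euclidean

variable {d : ℕ}

theorem affine_sub_affine_le_mul_enorm3 {F : EuclideanSpace ℝ (Fin d) → ℝ} {L : ℝ}
    (hF : ∀ u v, |F u - F v| ≤ L * ‖u - v‖) (α β : ℝ) (p q : EuclideanSpace ℝ (Fin d) × ℝ × ℝ) :
    (F q.1 + α * q.2.1 + β * q.2.2) - (F p.1 + α * p.2.1 + β * p.2.2)
      ≤ √(L ^ 2 + α ^ 2 + β ^ 2) * enorm3 (q - p) :=
  calc (F q.1 + α * q.2.1 + β * q.2.2) - (F p.1 + α * p.2.1 + β * p.2.2)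
      ≤ L * ‖q.1 - p.1‖ + α * (q.2.1 - p.2.1) + β * (q.2.2 - p.2.2) := by
        linarith [le_of_abs_le (hF q.1 p.1)]
    _ ≤ √(L ^ 2 + α ^ 2 + β ^ 2) * enorm3 (q - p) := dot_le_sqrt_mul_sqrt _ _ _ _ _ _

variable {f h : EuclideanSpace ℝ (Fin d) → ℝ} {a b Lf Lh : ℝ}

theorem doubleEpigraphGap_le_edist3 (ha : a ≠ 0) (hb : b ≠ 0)
    (hfL : ∀ u v, |f u - f v| ≤ Lf * ‖u - v‖) (hhL : ∀ u v, |h u - h v| ≤ Lh * ‖u - v‖)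
    (q : EuclideanSpace ℝ (Fin d) × ℝ × ℝ) :
    doubleEpigraphGap f h a b √(b ^ 2 + a ^ 2 + Lf ^ 2) √(a ^ 2 + Lh ^ 2) q
      ≤ edist3 q (doubleEpigraph f h a b) := by
  refine le_csInf ((doubleEpigraph_nonempty ha hb).image _) ?_
  rintro _ ⟨p, ⟨hph, hpf⟩, rfl⟩
  have hh := affine_sub_affine_le_mul_enorm3 hhL (-a) 0 p q
  have hf := affine_sub_affine_le_mul_enorm3 hfL a (-b) p q
  rw [show Lh ^ 2 + (-a) ^ 2 + 0 ^ 2 = a ^ 2 + Lh ^ 2 by ring] at hh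
  rw [show Lf ^ 2 + a ^ 2 + (-b) ^ 2 = b ^ 2 + a ^ 2 + Lf ^ 2 by ring] at hf
  rw [doubleEpigraphGap, max_le_iff, div_le_iff₀ (sqrt_pos.2 (by positivity)),
    div_le_iff₀ (sqrt_pos.2 (by positivity))]
  constructor <;> linarith

end Euclidean

theorem stmt_16_general {d : ℕ} (a b η τ Lf Lh : ℝ)
    (ha : 0 < a) (hb : 0 < b) (hη : 0 < η)
    (f h : EuclideanSpace ℝ (Fin d) → ℝ)
    (hfL : ∀ u v, |f u - f v| ≤ Lf * ‖u - v‖)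
    (hhL : ∀ u v, |h u - h v| ≤ Lh * ‖u - v‖) :
    ∫⁻ q : EuclideanSpace ℝ (Fin d) × ℝ × ℝ,
      ENNReal.ofReal (Real.exp (-b * q.2.2) *
        Real.exp (-(edist3 q {p : EuclideanSpace ℝ (Fin d) × ℝ × ℝ |
            h p.1 ≤ a * p.2.1 ∧ f p.1 + a * p.2.1 ≤ b * p.2.2} - τ) ^ 2 / (2 * η)))
    ≤ (∫⁻ p in {p : EuclideanSpace ℝ (Fin d) × ℝ × ℝ |
            h p.1 ≤ a * p.2.1 ∧ f p.1 + a * p.2.1 ≤ b * p.2.2},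
          ENNReal.ofReal (Real.exp (-b * p.2.2)))
      * ENNReal.ofReal
          (Real.exp (τ * (Real.sqrt (b ^ 2 + a ^ 2 + Lf ^ 2) + Real.sqrt (a ^ 2 + Lh ^ 2))) *
            ((Real.sqrt (b ^ 2 + a ^ 2 + Lf ^ 2) + Real.sqrt (a ^ 2 + Lh ^ 2))
                * Real.sqrt (2 * Real.pi * η)
                * Real.exp (η * (Real.sqrt (b ^ 2 + a ^ 2 + Lf ^ 2)
                    + Real.sqrt (a ^ 2 + Lh ^ 2)) ^ 2 / 2) + 1)) := by
  set Cf := √(b ^ 2 + a ^ 2 + Lf ^ 2)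
  set Ch := √(a ^ 2 + Lh ^ 2)
  have hCf : 0 < Cf := sqrt_pos.2 (by positivity)
  have hCh : 0 < Ch := sqrt_pos.2 (by positivity)
  set G := doubleEpigraphGap f h a b Cf Ch
  have hG : Measurable G := (continuous_doubleEpigraphGap (continuous_of_abs_sub_le_mul_norm hfL)
    (continuous_of_abs_sub_le_mul_norm hhL) Cf Ch).measurable
  calc _ ≤ ∫⁻ q, ENNReal.ofReal (exp (-b * q.2.2))
          * ∫⁻ r in Ioi (G q), rayleighDensity η τ r := by
        refine lintegral_mono fun q => ?_
        rw [ENNReal.ofReal_mul (exp_pos _).le]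
        gcongr
        exact ofReal_exp_le_lintegral_Ioi_rayleighDensity hη τ
          (doubleEpigraphGap_le_edist3 ha.ne' hb.ne' hfL hhL q)
    _ = ∫⁻ r, (∫⁻ q in {q | G q < r}, ENNReal.ofReal (exp (-b * q.2.2)))
          * rayleighDensity η τ r :=
        lintegral_mul_setLIntegral_Ioi_eq (by fun_prop) hG (measurable_rayleighDensity η τ)
    _ ≤ ∫⁻ r, (∫⁻ p in doubleEpigraph f h a b, ENNReal.ofReal (exp (-b * p.2.2)))
          * (rayleighDensity η τ r * ENNReal.ofReal (exp ((Cf + Ch) * r))) :=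
        lintegral_mono fun r => (mul_le_mul_of_nonneg_right
          (setLIntegral_doubleEpigraphGap_lt_le ha.ne' hb.ne' hCf hCh r) zero_le).trans_eq
            (by ring)
    _ ≤ _ := by
        rw [lintegral_const_mul _ (by fun_prop)]
        exact mul_le_mul_of_nonneg_left
          (lintegral_rayleighDensity_mul_exp_le hη τ (by positivity)) zero_le

/-- Key technical estimate (composite case): for
`Q̃ = {(x,s,t) : h x ≤ a s, f x + a s ≤ b t}` with `f, h` Lipschitz (constants `L_f, L_h`),
`∫ e^{-f-h} < ∞`, and `C̃_L = √(b²+a²+L_f²) + √(a²+L_h²)`, for any `τ ≥ 0`,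
`∫_{ℝ^{d+2}} e^{-b q_{d+2}} exp(-(dist(q,Q̃)-τ)²/(2η)) dq
  ≤ Z_{Q̃} e^{τC̃_L} (C̃_L √(2πη) e^{ηC̃_L²/2} + 1)`. -/
theorem stmt_16 {d : ℕ} (hd : 1 ≤ d) (a b η τ Lf Lh : ℝ)
    (ha : 0 < a) (hb : 0 < b) (hη : 0 < η) (hτ : 0 ≤ τ)
    (f h : EuclideanSpace ℝ (Fin d) → ℝ)
    (hfL : ∀ u v, |f u - f v| ≤ Lf * ‖u - v‖)
    (hhL : ∀ u v, |h u - h v| ≤ Lh * ‖u - v‖)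
    (hint : (∫⁻ x : EuclideanSpace ℝ (Fin d),
      ENNReal.ofReal (Real.exp (-f x - h x))) < ⊤) :
    ∫⁻ q : EuclideanSpace ℝ (Fin d) × ℝ × ℝ,
      ENNReal.ofReal (Real.exp (-b * q.2.2) *
        Real.exp (-(edist3 q {p : EuclideanSpace ℝ (Fin d) × ℝ × ℝ |
            h p.1 ≤ a * p.2.1 ∧ f p.1 + a * p.2.1 ≤ b * p.2.2} - τ) ^ 2 / (2 * η)))
    ≤ (∫⁻ p in {p : EuclideanSpace ℝ (Fin d) × ℝ × ℝ |
            h p.1 ≤ a * p.2.1 ∧ f p.1 + a * p.2.1 ≤ b * p.2.2},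
          ENNReal.ofReal (Real.exp (-b * p.2.2)))
      * ENNReal.ofReal
          (Real.exp (τ * (Real.sqrt (b ^ 2 + a ^ 2 + Lf ^ 2) + Real.sqrt (a ^ 2 + Lh ^ 2))) *
            ((Real.sqrt (b ^ 2 + a ^ 2 + Lf ^ 2) + Real.sqrt (a ^ 2 + Lh ^ 2))
                * Real.sqrt (2 * Real.pi * η)
                * Real.exp (η * (Real.sqrt (b ^ 2 + a ^ 2 + Lf ^ 2)
                    + Real.sqrt (a ^ 2 + Lh ^ 2)) ^ 2 / 2) + 1)) :=
  stmt_16_general a b η τ Lf Lh ha hb hη f h hfL hhL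
end

section
/- Let d ≥ 1, a > 0, b > 0. Let f, h : ℝ^d → ℝ be Lipschitz continuous with constants L_f and L_h respectively, and let Q̃ = {(x,s,t) ∈ ℝ^d × ℝ × ℝ : h(x) ≤ a s, f(x) + a s ≤ b t}. Set C̃_f = √(b² + a² + L_f²), C̃_h = √(a² + L_h²), μ = min{a/C̃_h, b/C̃_f}, λ = 2 + a/b, and fix c > 1 and κ = (c−1)/(λ+μ). Let q ∈ ℝ^{d+2}, let p* ∈ Q̃ with ‖p* − q‖ ≤ r_loc for some r_loc > 0, set Δs = Δt = κ·r_loc and p̄ = p* + (0, Δs, (a/b)Δs + Δt) ∈ ℝ^d × ℝ × ℝ. Then the closed Euclidean ball of radius κ·μ·r_loc centered at p̄ is contained in Q̃ ∩ B(q, c·r_loc), where B(q, c·r_loc) is the closed Euclidean ball of radius c·r_loc centered at q. -/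
noncomputable def toProdL2 {d : ℕ} (p : EuclideanSpace ℝ (Fin d) × ℝ × ℝ) :
    WithLp 2 (EuclideanSpace ℝ (Fin d) × WithLp 2 (ℝ × ℝ)) :=
  WithLp.toLp 2 (p.1, WithLp.toLp 2 (p.2.1, p.2.2))

lemma enorm3_eq_norm_toProdL2 {d : ℕ} (p : EuclideanSpace ℝ (Fin d) × ℝ × ℝ) :
    enorm3 p = ‖toProdL2 p‖ := by
  have hsnd : ‖(toProdL2 p).snd‖ ^ 2 = p.2.1 ^ 2 + p.2.2 ^ 2 := by
    rw [WithLp.prod_norm_sq_eq_of_L2]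
    simp [toProdL2, Real.norm_eq_abs, sq_abs]
  rw [enorm3, WithLp.prod_norm_eq_of_L2, hsnd, add_assoc]
  rfl

lemma enorm3_add_le {d : ℕ} (p p' : EuclideanSpace ℝ (Fin d) × ℝ × ℝ) :
    enorm3 (p + p') ≤ enorm3 p + enorm3 p' := by
  simp only [enorm3_eq_norm_toProdL2]
  exact norm_add_le (toProdL2 p) (toProdL2 p')

lemma enorm3_le_norm_add_abs_add_abs {d : ℕ} (p : EuclideanSpace ℝ (Fin d) × ℝ × ℝ) :
    enorm3 p ≤ ‖p.1‖ + |p.2.1| + |p.2.2| := by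
  rw [enorm3, Real.sqrt_le_left (by positivity)]
  nlinarith [sq_abs p.2.1, sq_abs p.2.2, norm_nonneg p.1, abs_nonneg p.2.1, abs_nonneg p.2.2]

lemma mul_add_mul_add_mul_le_sqrt_mul_sqrt (u v w x y z : ℝ) :
    u * x + v * y + w * z ≤ √(u ^ 2 + v ^ 2 + w ^ 2) * √(x ^ 2 + y ^ 2 + z ^ 2) := by
  simpa [Fin.sum_univ_three] using
    Real.sum_mul_le_sqrt_mul_sqrt Finset.univ ![u, v, w] ![x, y, z]

lemma add_mul_add_mul_le_add_sqrt_mul_enorm3 {d : ℕ} {g : EuclideanSpace ℝ (Fin d) → ℝ}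
    {L : ℝ} (hg : ∀ u v, |g u - g v| ≤ L * ‖u - v‖) (α β : ℝ)
    (p p₀ : EuclideanSpace ℝ (Fin d) × ℝ × ℝ) :
    g p.1 + α * p.2.1 + β * p.2.2 ≤
      g p₀.1 + α * p₀.2.1 + β * p₀.2.2 + √(L ^ 2 + α ^ 2 + β ^ 2) * enorm3 (p - p₀) := by
  have hcs := mul_add_mul_add_mul_le_sqrt_mul_sqrt L α β ‖p.1 - p₀.1‖ (p.2.1 - p₀.2.1)
    (p.2.2 - p₀.2.2)
  have hgp := (le_abs_self _).trans (hg p.1 p₀.1)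
  rw [enorm3]
  simp only [Prod.fst_sub, Prod.snd_sub]
  linarith

lemma enorm3_sub_le_add_add {d : ℕ} (p q p₀ v : EuclideanSpace ℝ (Fin d) × ℝ × ℝ) :
    enorm3 (p - q) ≤ enorm3 (p - (p₀ + v)) + enorm3 v + enorm3 (p₀ - q) := by
  calc enorm3 (p - q) = enorm3 ((p - (p₀ + v)) + (v + (p₀ - q))) := by congr 1; abel
    _ ≤ enorm3 (p - (p₀ + v)) + (enorm3 v + enorm3 (p₀ - q)) :=
        (enorm3_add_le _ _).trans (by gcongr; exact enorm3_add_le _ _)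
    _ = _ := by ring

lemma enorm3_shift_le {d : ℕ} {r Δ : ℝ} (hr : 0 ≤ r) (hΔ : 0 ≤ Δ) :
    enorm3 ((0 : EuclideanSpace ℝ (Fin d)), Δ, r * Δ + Δ) ≤ (2 + r) * Δ := by
  refine (enorm3_le_norm_add_abs_add_abs _).trans ?_
  simp only [norm_zero, abs_of_nonneg hΔ, abs_of_nonneg (by positivity : 0 ≤ r * Δ + Δ)]
  linarith

def localSet {E : Type*} (f h : E → ℝ) (a b : ℝ) : Set (E × ℝ × ℝ) :=
  {p | h p.1 ≤ a * p.2.1 ∧ f p.1 + a * p.2.1 ≤ b * p.2.2}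

lemma mem_localSet_of_enorm3_sub_le {d : ℕ} {f h : EuclideanSpace ℝ (Fin d) → ℝ}
    {a b Lf Lh μ Δ : ℝ} (hb : 0 < b)
    (hfL : ∀ u v, |f u - f v| ≤ Lf * ‖u - v‖) (hhL : ∀ u v, |h u - h v| ≤ Lh * ‖u - v‖)
    (hμh : √(a ^ 2 + Lh ^ 2) * μ ≤ a) (hμf : √(b ^ 2 + a ^ 2 + Lf ^ 2) * μ ≤ b) (hΔ : 0 ≤ Δ)
    {ps p : EuclideanSpace ℝ (Fin d) × ℝ × ℝ} (hps : ps ∈ localSet f h a b)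
    (hp : enorm3 (p - (ps + (0, Δ, a / b * Δ + Δ))) ≤ μ * Δ) :
    p ∈ localSet f h a b := by
  set pbar := ps + (0, Δ, a / b * Δ + Δ)
  have hh := add_mul_add_mul_le_add_sqrt_mul_enorm3 hhL (-a) 0 p pbar
  have hf := add_mul_add_mul_le_add_sqrt_mul_enorm3 hfL a (-b) p pbar
  rw [show Lh ^ 2 + (-a) ^ 2 + 0 ^ 2 = a ^ 2 + Lh ^ 2 by ring] at hh
  rw [show Lf ^ 2 + a ^ 2 + (-b) ^ 2 = b ^ 2 + a ^ 2 + Lf ^ 2 by ring] at hf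
  have hslack_h : √(a ^ 2 + Lh ^ 2) * (μ * Δ) ≤ a * Δ := by
    rw [← mul_assoc]; exact mul_le_mul_of_nonneg_right hμh hΔ
  have hslack_f : √(b ^ 2 + a ^ 2 + Lf ^ 2) * (μ * Δ) ≤ b * Δ := by
    rw [← mul_assoc]; exact mul_le_mul_of_nonneg_right hμf hΔ
  have hball_h := mul_le_mul_of_nonneg_left hp (Real.sqrt_nonneg (a ^ 2 + Lh ^ 2))
  have hball_f := mul_le_mul_of_nonneg_left hp (Real.sqrt_nonneg (b ^ 2 + a ^ 2 + Lf ^ 2))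
  have hb_ab : b * (a / b * Δ) = a * Δ := by rw [← mul_assoc, mul_div_cancel₀ a hb.ne']
  simp only [pbar, Prod.fst_add, Prod.snd_add, add_zero] at hh hf
  exact ⟨by linarith [hps.1], by linarith [hps.2]⟩

theorem stmt_17_general {d : ℕ} (a b Lf Lh c rloc : ℝ)
    (ha : 0 < a) (hb : 0 < b) (hc : 1 < c) (hr : 0 < rloc)
    (f h : EuclideanSpace ℝ (Fin d) → ℝ)
    (hfL : ∀ u v, |f u - f v| ≤ Lf * ‖u - v‖)
    (hhL : ∀ u v, |h u - h v| ≤ Lh * ‖u - v‖)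
    (mu lambda kappa : ℝ)
    (hmu : mu = min (a / Real.sqrt (a ^ 2 + Lh ^ 2)) (b / Real.sqrt (b ^ 2 + a ^ 2 + Lf ^ 2)))
    (hlambda : lambda = 2 + a / b)
    (hkappa : kappa = (c - 1) / (lambda + mu))
    (q ps : EuclideanSpace ℝ (Fin d) × ℝ × ℝ)
    (hps : h ps.1 ≤ a * ps.2.1 ∧ f ps.1 + a * ps.2.1 ≤ b * ps.2.2)
    (hpq : enorm3 (ps - q) ≤ rloc) :
    ∀ p : EuclideanSpace ℝ (Fin d) × ℝ × ℝ,
      enorm3 (p - (ps + ((0 : EuclideanSpace ℝ (Fin d)), kappa * rloc,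
          (a / b) * (kappa * rloc) + kappa * rloc))) ≤ kappa * mu * rloc →
      (h p.1 ≤ a * p.2.1 ∧ f p.1 + a * p.2.1 ≤ b * p.2.2) ∧ enorm3 (p - q) ≤ c * rloc := by
  intro p hp
  set Δ := kappa * rloc
  have hCh : 0 < √(a ^ 2 + Lh ^ 2) := by positivity
  have hCf : 0 < √(b ^ 2 + a ^ 2 + Lf ^ 2) := by positivity
  have hmu_pos : 0 < mu := hmu ▸ lt_min (by positivity) (by positivity)
  have hlam_pos : 0 < lambda := hlambda ▸ by positivity
  have hΔ : 0 ≤ Δ := by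
    have : 0 < kappa := hkappa ▸ div_pos (by linarith) (by linarith)
    positivity
  have hmu_h := (le_div_iff₀' hCh).mp (hmu ▸ min_le_left _ _)
  have hmu_f := (le_div_iff₀' hCf).mp (hmu ▸ min_le_right _ _)
  refine ⟨mem_localSet_of_enorm3_sub_le hb hfL hhL hmu_h hmu_f hΔ hps (hp.trans_eq (by ring)), ?_⟩
  calc enorm3 (p - q) ≤ kappa * mu * rloc + (2 + a / b) * Δ + rloc :=
        (enorm3_sub_le_add_add _ _ ps _).trans
          (by gcongr; exact enorm3_shift_le (by positivity) hΔ)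
    _ = (lambda + mu) * kappa * rloc + rloc := by rw [hlambda]; ring
    _ = c * rloc := by
        rw [hkappa, mul_div_cancel₀ _ (by positivity : lambda + mu ≠ 0)]
        ring

/-- Inscribed-ball construction for the local set: with
`Q̃ = {(x,s,t) : h x ≤ a s, f x + a s ≤ b t}`, `μ = min(a/C̃_h, b/C̃_f)`, `λ = 2 + a/b`,
`κ = (c-1)/(λ+μ)`, `p* ∈ Q̃` with `‖p* - q‖ ≤ r_loc`, and
`p̄ = p* + (0, Δs, (a/b)Δs + Δt)` with `Δs = Δt = κ r_loc`, the closed ball of radius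
`κ μ r_loc` centered at `p̄` is contained in `Q̃ ∩ B(q, c r_loc)`. -/
theorem stmt_17 {d : ℕ} (hd : 1 ≤ d) (a b Lf Lh c rloc : ℝ)
    (ha : 0 < a) (hb : 0 < b) (hLf : 0 ≤ Lf) (hLh : 0 ≤ Lh) (hc : 1 < c) (hr : 0 < rloc)
    (f h : EuclideanSpace ℝ (Fin d) → ℝ)
    (hfL : ∀ u v, |f u - f v| ≤ Lf * ‖u - v‖)
    (hhL : ∀ u v, |h u - h v| ≤ Lh * ‖u - v‖)
    (mu lambda kappa : ℝ)
    (hmu : mu = min (a / Real.sqrt (a ^ 2 + Lh ^ 2)) (b / Real.sqrt (b ^ 2 + a ^ 2 + Lf ^ 2)))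
    (hlambda : lambda = 2 + a / b)
    (hkappa : kappa = (c - 1) / (lambda + mu))
    (q ps : EuclideanSpace ℝ (Fin d) × ℝ × ℝ)
    (hps : h ps.1 ≤ a * ps.2.1 ∧ f ps.1 + a * ps.2.1 ≤ b * ps.2.2)
    (hpq : enorm3 (ps - q) ≤ rloc) :
    ∀ p : EuclideanSpace ℝ (Fin d) × ℝ × ℝ,
      enorm3 (p - (ps + ((0 : EuclideanSpace ℝ (Fin d)), kappa * rloc,
          (a / b) * (kappa * rloc) + kappa * rloc))) ≤ kappa * mu * rloc →
      (h p.1 ≤ a * p.2.1 ∧ f p.1 + a * p.2.1 ≤ b * p.2.2) ∧ enorm3 (p - q) ≤ c * rloc :=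
  stmt_17_general a b Lf Lh c rloc ha hb hc hr f h hfL hhL mu lambda kappa hmu hlambda hkappa q ps
    hps hpq
end

section
/- Let m ≥ 1, η > 0, δ > 0. Let Q̃ ⊆ ℝ^m be nonempty, closed and convex, let q ∈ ℝ^m, let p* ∈ Q̃ be the metric projection of q onto Q̃ (so ‖p* − q‖ ≤ ‖p − q‖ for all p ∈ Q̃), and let p̃ ∈ Q̃ satisfy ‖p̃ − q‖² − ‖p* − q‖² ≤ δ². Then ‖p̃ − p*‖ ≤ δ, and for every p ∈ Q̃: (‖p − p̃‖² + ‖p̃ − q‖²)/(2η) − (δ/η)·(‖p − p̃‖ + ‖p̃ − q‖) − δ²/η ≤ ‖p − q‖²/(2η). In particular, with m = d+2 and δ = √(2η/(d+2)), the rejection-sampling proposal potential P̃₁ of the composite restricted Gaussian oracle lies below the RGO potential Θ̃^{η,Q̃}_{y,u,v} everywhere, so the acceptance ratio is at most 1. -/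
open scoped RealInnerProductSpace

set_option maxHeartbeats 1000000


/-- If `p*` is the projection of `q` onto the nonempty closed convex set `Q̃ ⊆ ℝ^m` and
`p̃ ∈ Q̃` satisfies `‖p̃ - q‖² - ‖p* - q‖² ≤ δ²`, then `‖p̃ - p*‖ ≤ δ`, and for every
`p ∈ Q̃`,
`(‖p - p̃‖² + ‖p̃ - q‖²)/(2η) - (δ/η)(‖p - p̃‖ + ‖p̃ - q‖) - δ²/η ≤ ‖p - q‖²/(2η)`:
the composite proposal potential lies below the RGO potential. -/
theorem stmt_18 {m : ℕ} (hm : 1 ≤ m) (η δ : ℝ) (hη : 0 < η) (hδ : 0 < δ)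
    (Qt : Set (EuclideanSpace ℝ (Fin m))) (hne : Qt.Nonempty) (hcl : IsClosed Qt)
    (hconv : Convex ℝ Qt)
    (q ps : EuclideanSpace ℝ (Fin m)) (hps : ps ∈ Qt)
    (hproj : ∀ p ∈ Qt, ‖ps - q‖ ≤ ‖p - q‖)
    (pt : EuclideanSpace ℝ (Fin m)) (hpt : pt ∈ Qt)
    (happx : ‖pt - q‖ ^ 2 - ‖ps - q‖ ^ 2 ≤ δ ^ 2) :
    ‖pt - ps‖ ≤ δ ∧
      ∀ p ∈ Qt,
        (‖p - pt‖ ^ 2 + ‖pt - q‖ ^ 2) / (2 * η)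
            - (δ / η) * (‖p - pt‖ + ‖pt - q‖) - δ ^ 2 / η
          ≤ ‖p - q‖ ^ 2 / (2 * η) := by
  -- ps is the infimum of distances from q to Qt
  haveI : Nonempty Qt := ⟨⟨ps, hps⟩⟩
  have hps_norm : ‖q - ps‖ = ⨅ w : Qt, ‖q - w‖ := by
    apply le_antisymm
    · apply le_ciInf
      intro w
      rw [norm_sub_rev, norm_sub_rev q w]
      exact hproj w w.2
    · have hb : BddBelow (Set.range fun w : Qt => ‖q - (w : EuclideanSpace ℝ (Fin m))‖) := by
        refine ⟨0, ?_⟩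
        rintro x ⟨w, rfl⟩
        exact norm_nonneg _
      exact ciInf_le hb ⟨ps, hps⟩
  have hinner : ∀ p ∈ Qt, ⟪q - ps, p - ps⟫ ≤ 0 :=
    (norm_eq_iInf_iff_real_inner_le_zero hconv hps).mp hps_norm
  -- Pythagorean inequality
  have pyth : ∀ p ∈ Qt, ‖p - ps‖ ^ 2 + ‖ps - q‖ ^ 2 ≤ ‖p - q‖ ^ 2 := by
    intro p hp
    have h1 : ⟪q - ps, p - ps⟫ ≤ 0 := hinner p hp
    have h2 : p - q = (p - ps) - (q - ps) := by abel
    have h3 : ‖p - q‖ ^ 2 = ‖p - ps‖ ^ 2 - 2 * ⟪p - ps, q - ps⟫ + ‖q - ps‖ ^ 2 := by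
      rw [h2, @norm_sub_sq_real]
    have h4 : ⟪p - ps, q - ps⟫ = ⟪q - ps, p - ps⟫ := real_inner_comm _ _
    rw [norm_sub_rev ps q]
    linarith [h3, h4 ▸ h1]
  have hdist : ‖pt - ps‖ ≤ δ := by
    have := pyth pt hpt
    nlinarith [norm_nonneg (pt - ps), hδ]
  refine ⟨hdist, fun p hp => ?_⟩
  have hpy := pyth p hp
  have hA : ‖p - pt‖ ≤ ‖p - ps‖ + δ := by
    have h : ‖p - pt‖ ≤ ‖p - ps‖ + ‖ps - pt‖ := by
      simpa [dist_eq_norm] using dist_triangle p ps pt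
    have h2 : ‖ps - pt‖ = ‖pt - ps‖ := norm_sub_rev _ _
    linarith
  have hB : ‖pt - q‖ ≤ ‖ps - q‖ + δ := by
    have h : ‖pt - q‖ ≤ ‖pt - ps‖ + ‖ps - q‖ := by
      simpa [dist_eq_norm] using dist_triangle pt ps q
    linarith
  have key : ‖p - pt‖ ^ 2 + ‖pt - q‖ ^ 2 - 2 * δ * (‖p - pt‖ + ‖pt - q‖) - 2 * δ ^ 2
      ≤ ‖p - q‖ ^ 2 := by
    nlinarith [norm_nonneg (p - ps), norm_nonneg (ps - q), norm_nonneg (p - pt),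
      norm_nonneg (pt - q), sq_nonneg (‖p - ps‖ - ‖p - pt‖ + δ),
      sq_nonneg (‖ps - q‖ - ‖pt - q‖ + δ), hδ.le,
      mul_nonneg (norm_nonneg (p - ps)) hδ.le, mul_nonneg (norm_nonneg (ps - q)) hδ.le]
  have h2η : (0:ℝ) < 2 * η := by linarith
  calc (‖p - pt‖ ^ 2 + ‖pt - q‖ ^ 2) / (2 * η)
        - (δ / η) * (‖p - pt‖ + ‖pt - q‖) - δ ^ 2 / η
      = (‖p - pt‖ ^ 2 + ‖pt - q‖ ^ 2 - 2 * δ * (‖p - pt‖ + ‖pt - q‖) - 2 * δ ^ 2)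
          / (2 * η) := by field_simp
    _ ≤ ‖p - q‖ ^ 2 / (2 * η) := by gcongr
end
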